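/- arXiv:2409.07848 — 3 statements merged into one kernel-verified Lean document; each statement's English description precedes it below -/
import Mathlib

section
/- Let 𝕄 = (M_1, …, M_k) be a tuple of matroids with M_i = (E_i, 𝓑_i), and let K be the set of coloops of the matroid union ⋁_{i=1}^k M_i. For any two feasible basis sequences 𝔹 = (B_1, …, B_k) and 𝔹' = (B'_1, …, B'_k) of 𝕄, the sequence 𝔹 is reconfigurable to 𝔹' if and only if K ∩ B_i = K ∩ B'_i for every i ∈ {1, …, k}. -/
/-!
Reconfiguration preserves `K ∩ B i`: for every feasible `B`, `⋃ B` is a basis of the union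
matroid, so a coloop lies in exactly one `B j`, and a move, which changes a single `B i`, can
neither remove it nor add it.

Conversely, we decrease `∑ i, |B' i \ B i|`. If some `y ∈ B' i` lies outside `⋃ B`, exchanging
`y` into `B i` for some `x ∈ B i \ B' i` is a single move. Otherwise `⋃ B = ⋃ B'`, and exchanging
towards `B'` produces a closed walk of arcs `x → y` of the exchangeability graph with `y ∈ B' i`;
applying all of its arcs brings us closer to `B'`. Its vertices are not coloops, and from a
non-coloop some free vertex of `E \ ⋃ B` is reachable, since otherwise the reachable set would lie
in every union basis. A shortest such cycle followed by a shortest escape path is a shortcut-free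
tadpole-walk. By the multiple exchange lemma, any set of its arcs whose heads land on vacated
vertices can be applied at once; so we apply the path arcs from the free end backwards, swap the
arc leaving the root, and take the path arcs back, which leaves exactly the cycle applied.
-/

universe u

/-- A matroid given by its finite ground set and its nonempty family of bases
satisfying the basis exchange axiom. -/
structure FinMatroid (α : Type u) [DecidableEq α] where
  E : Finset α
  Bases : Finset α → Prop
  bases_subset_ground : ∀ B, Bases B → B ⊆ E
  bases_nonempty : ∃ B, Bases B
  basis_exchange : ∀ B B', Bases B → Bases B' → ∀ x ∈ B, x ∉ B' →
    ∃ y ∈ B', y ∉ B ∧ Bases (insert y (B.erase x))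

variable {α : Type u} [DecidableEq α] {k : ℕ}

/-- A feasible basis sequence: each `B i` is a basis of `M i` and the bases are
pairwise disjoint. -/
def FeasibleSeq (M : Fin k → FinMatroid α) (B : Fin k → Finset α) : Prop :=
  (∀ i, (M i).Bases (B i)) ∧ ∀ i j, i ≠ j → Disjoint (B i) (B j)

/-- Two feasible basis sequences are adjacent if they differ in exactly one
coordinate `i`, by a single exchange `B' i = (B i \ {x}) ∪ {y}` with `x ∈ B i`
and `y ∈ E i \ B i`. -/
def AdjacentSeq (M : Fin k → FinMatroid α) (B B' : Fin k → Finset α) : Prop :=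
  ∃ i : Fin k, (∀ j, j ≠ i → B j = B' j) ∧
    ∃ x ∈ B i, ∃ y ∈ (M i).E, y ∉ B i ∧ B' i = insert y ((B i).erase x)

/-- A reconfiguration sequence of length `ℓ` from `B` to `B'`. -/
def ReconfigSeq (M : Fin k → FinMatroid α) (B B' : Fin k → Finset α) (ℓ : ℕ) : Prop :=
  ∃ seq : ℕ → Fin k → Finset α, seq 0 = B ∧ seq ℓ = B' ∧
    (∀ t ≤ ℓ, FeasibleSeq M (seq t)) ∧
    ∀ t < ℓ, AdjacentSeq M (seq t) (seq (t + 1))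

/-- `B` is reconfigurable to `B'`. -/
def Reconfigurable (M : Fin k → FinMatroid α) (B B' : Fin k → Finset α) : Prop :=
  ∃ ℓ : ℕ, ReconfigSeq M B B' ℓ

/-- The ground set `⋃ i, E i` of the matroid union. -/
def UnionGround (M : Fin k → FinMatroid α) : Finset α :=
  Finset.univ.biUnion fun i => (M i).E

/-- Sets of the form `B 1 ∪ ⋯ ∪ B k` with each `B i` a basis of `M i`. -/
def IsUnionCandidate (M : Fin k → FinMatroid α) (U : Finset α) : Prop :=
  ∃ b : Fin k → Finset α, (∀ i, (M i).Bases (b i)) ∧ U = Finset.univ.biUnion b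

/-- Bases of the matroid union `⋁ i, M i`: maximal sets among unions of bases. -/
def IsUnionBasis (M : Fin k → FinMatroid α) (U : Finset α) : Prop :=
  IsUnionCandidate M U ∧ ∀ V, IsUnionCandidate M V → U ⊆ V → U = V

/-- A coloop of the matroid union: an element of every basis of `⋁ i, M i`. -/
def IsUnionColoop (M : Fin k → FinMatroid α) (x : α) : Prop :=
  ∀ U, IsUnionBasis M U → x ∈ U

/-- The arc set `A i` of the exchangeability graph `D(M i, B i)`:
`(x, y)` with `x ∈ B i`, `y ∈ E i \ B i` and `(B i \ {x}) ∪ {y}` a basis. -/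
def ArcOf (M : Fin k → FinMatroid α) (B : Fin k → Finset α) (i : Fin k) (a : α × α) : Prop :=
  a.1 ∈ B i ∧ a.2 ∈ (M i).E ∧ a.2 ∉ B i ∧ (M i).Bases (insert a.2 ((B i).erase a.1))

/-- Arcs of the exchangeability graph `D(𝕄, 𝔹)`. -/
def ArcD (M : Fin k → FinMatroid α) (B : Fin k → Finset α) (a : α × α) : Prop :=
  ∃ i, ArcOf M B i a

/-- A vertex of `D(𝕄, 𝔹)` lying in `E \ ⋃ i, B i`. -/
def FreeVertex (M : Fin k → FinMatroid α) (B : Fin k → Finset α) (v : α) : Prop :=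
  v ∈ UnionGround M ∧ ∀ i, v ∉ B i

/-- A tadpole-walk `(x 0, …, x m = x 0, …, x n)` in `D(𝕄, 𝔹)`: the first part
(up to `m`) is a (possibly empty) directed cycle, the rest is a directed path,
the vertices are distinct except `x 0 = x m`, and `x n ∈ E \ ⋃ i, B i`. -/
structure TadpoleWalk (M : Fin k → FinMatroid α) (B : Fin k → Finset α) where
  n : ℕ
  m : ℕ
  x : ℕ → α
  m_lt_n : m < n
  closed : x m = x 0
  arc : ∀ t < n, ArcD M B (x t, x (t + 1))
  distinct : ∀ s t, s < t → t ≤ n → x s = x t → s = 0 ∧ t = m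
  last_free : FreeVertex M B (x n)

/-- The order `≺` on the vertices of a tadpole-walk with cycle length `m`,
expressed on positions: the vertex at position `p` precedes the vertex at
position `q` iff `x q` is not the smallest vertex `x 0 = x m` and either `x p`
is the smallest vertex or `p < q`. -/
def TadpolePrec (m p q : ℕ) : Prop :=
  ¬(q = 0 ∨ q = m) ∧ ((p = 0 ∨ p = m) ∨ p < q)

/-- A tadpole-walk is shortcut-free if for any two of its arcs `a, a'` lying in
the same `A i` with `tail a ≺ tail a'`, the pair `(tail a, head a')` is not an
arc of `A i`. -/
def ShortcutFree {M : Fin k → FinMatroid α} {B : Fin k → Finset α}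
    (W : TadpoleWalk M B) : Prop :=
  ∀ i : Fin k, ∀ p < W.n, ∀ q < W.n,
    ArcOf M B i (W.x p, W.x (p + 1)) → ArcOf M B i (W.x q, W.x (q + 1)) →
      TadpolePrec W.m p q → ¬ ArcOf M B i (W.x p, W.x (q + 1))

/-- The set of arcs of a tadpole-walk. -/
def ArcsOfWalk {M : Fin k → FinMatroid α} {B : Fin k → Finset α}
    (W : TadpoleWalk M B) : Set (α × α) :=
  {a | ∃ t, t < W.n ∧ a = (W.x t, W.x (t + 1))}

/-- The consecutive arcs of a directed path given by its list of vertices. -/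
def pathArcs {β : Type u} (P : List β) : List (β × β) := P.zip P.tail

/-- The arcs of a directed cycle given by its list of vertices (including the
closing arc back to the first vertex). -/
def cycleArcs {β : Type u} : List β → List (β × β)
  | [] => []
  | v :: rest => (v :: rest).zip (rest ++ [v])

/-- A valid subgraph of `D(𝕄, 𝔹)`, given by its arc set `S`: the disjoint
union of a (possibly empty) directed path ending at a vertex of
`E \ ⋃ i, B i` and a (possibly empty) directed cycle. -/
def IsValidArcSet (M : Fin k → FinMatroid α) (B : Fin k → Finset α)
    (S : Finset (α × α)) : Prop :=
  ∃ P C : List α,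
    P.Nodup ∧ C.Nodup ∧ (∀ v ∈ P, v ∉ C) ∧
    (∀ a ∈ pathArcs P, ArcD M B a) ∧
    (∀ a ∈ cycleArcs C, ArcD M B a) ∧
    (∀ v, P.getLast? = some v → FreeVertex M B v) ∧
    S = (pathArcs P ++ cycleArcs C).toFinset

open Classical in
/-- `B i △ (S ∩ A i)`: remove from `B i` the tails of the arcs of `S` lying in
`A i` and add their heads. -/
noncomputable def applyArcs (M : Fin k → FinMatroid α) (B : Fin k → Finset α)
    (S : Finset (α × α)) (i : Fin k) : Finset α :=
  (B i \ (S.filter fun a => ArcOf M B i a).image Prod.fst) ∪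
    (S.filter fun a => ArcOf M B i a).image Prod.snd

/-- `M` is the partition matroid with blocks `P j` and ranks `r j`. -/
def IsPartitionStructure (M : FinMatroid α) {t : ℕ} (P : Fin t → Finset α)
    (r : Fin t → ℕ) : Prop :=
  (∀ j j', j ≠ j' → Disjoint (P j) (P j')) ∧
  Finset.univ.biUnion P = M.E ∧
  (∀ j, r j ≤ (P j).card) ∧
  ∀ B : Finset α, M.Bases B ↔ B ⊆ M.E ∧ ∀ j, (B ∩ P j).card = r j


theorem Set.insert_sdiff_singleton_sdiff_union {β : Type*} {a b : β} {s X Y : Set β}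
    (hb : b ∉ X) : insert b (s \ {a}) \ X ∪ Y = s \ insert a X ∪ insert b Y := by
  ext z
  by_cases hz : z = b
  · subst hz; simp [hb]
  · simp [hz, and_assoc]

namespace Matroid

variable {β : Type*} {M : Matroid β} {B B' I X : Set β} {e x : β}

theorem IsBase.insert_sdiff_isBase_iff_mem_fundCircuit (hB : M.IsBase B) (he : e ∈ M.E)
    (heB : e ∉ B) (hx : x ∈ B) :
    M.IsBase (insert e (B \ {x})) ↔ x ∈ M.fundCircuit e B := by
  rw [hB.indep.mem_fundCircuit_iff (by rwa [hB.closure_eq]) heB,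
    ← Set.insert_sdiff_singleton_comm (by rintro rfl; exact heB hx)]
  exact ⟨IsBase.indep, hB.exchange_isBase_of_indep heB⟩

theorem IsBase.rev_exchange (hB : M.IsBase B) (hB' : M.IsBase B') (he : e ∈ B' \ B) :
    ∃ x ∈ B \ B', M.IsBase (insert e (B \ {x})) := by
  have heE : e ∈ M.E := hB'.subset_ground he.1
  have hC := hB.fundCircuit_isCircuit heE he.2
  obtain ⟨x, hxC, hxB'⟩ := Set.not_subset.1 fun h => hC.not_indep (hB'.indep.subset h)
  have hxB : x ∈ B := by
    obtain rfl | hx := M.fundCircuit_subset_insert e B hxC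
    · exact absurd he.1 hxB'
    · exact hx
  exact ⟨x, ⟨hxB, hxB'⟩, (hB.insert_sdiff_isBase_iff_mem_fundCircuit heE he.2 hxB).2 hxC⟩

/-- The fundamental circuit of `e` avoids `x₀`, so it survives the exchange `x₀ ↦ y₀`. -/
theorem IsBase.insert_sdiff_isBase_iff_of_exchange (hB : M.IsBase B) {x₀ y₀ : β}
    (hx₀ : x₀ ∈ B) (hB₁ : M.IsBase (insert y₀ (B \ {x₀}))) (he : e ∈ M.E) (heB : e ∉ B)
    (hey₀ : e ≠ y₀) (hx₀e : ¬ M.IsBase (insert e (B \ {x₀}))) (hx : x ∈ B) (hxx₀ : x ≠ x₀) :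
    M.IsBase (insert e (insert y₀ (B \ {x₀}) \ {x})) ↔ M.IsBase (insert e (B \ {x})) := by
  have heB₁ : e ∉ insert y₀ (B \ {x₀}) := by simp [hey₀, heB]
  have hx₀C : x₀ ∉ M.fundCircuit e B :=
    mt (hB.insert_sdiff_isBase_iff_mem_fundCircuit he heB hx₀).2 hx₀e
  have hCB₁ : M.fundCircuit e B ⊆ insert e (insert y₀ (B \ {x₀})) := by
    intro z hz
    obtain rfl | hzB := M.fundCircuit_subset_insert e B hz
    · exact .inl rfl
    · exact .inr (.inr ⟨hzB, by rintro rfl; exact hx₀C hz⟩)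
  rw [hB.insert_sdiff_isBase_iff_mem_fundCircuit he heB hx,
    hB₁.insert_sdiff_isBase_iff_mem_fundCircuit he heB₁ (.inr ⟨hx, hxx₀⟩),
    ← (hB.fundCircuit_isCircuit he heB).eq_fundCircuit_of_subset hB₁.indep hCB₁]

/-- The multiple exchange lemma. Performing the `κ`-first exchange leaves the others
triangular, by `IsBase.insert_sdiff_isBase_iff_of_exchange`. -/
theorem IsBase.sdiff_image_union_image_isBase {ι γ : Type*} [LinearOrder γ] (hB : M.IsBase B)
    {s : Finset ι} {x y : ι → β} {κ : ι → γ} (hx : ∀ i ∈ s, x i ∈ B) (hy : ∀ i ∈ s, y i ∉ B)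
    (hxinj : Set.InjOn x s) (hyinj : Set.InjOn y s) (hκ : Set.InjOn κ s)
    (hexch : ∀ i ∈ s, M.IsBase (insert (y i) (B \ {x i})))
    (htri : ∀ i ∈ s, ∀ j ∈ s, κ i < κ j → ¬ M.IsBase (insert (y j) (B \ {x i}))) :
    M.IsBase (B \ x '' s ∪ y '' s) := by
  classical
  induction s using Finset.strongInduction generalizing B with
  | H s ih =>
  obtain rfl | hs := s.eq_empty_or_nonempty
  · simpa using hB
  obtain ⟨i₀, hi₀, hmin⟩ := s.exists_min_image κ hs
  have hmem : ∀ i ∈ s.erase i₀, i ∈ s ∧ i ≠ i₀ := fun i hi =>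
    ⟨Finset.mem_of_mem_erase hi, Finset.ne_of_mem_erase hi⟩
  have hxne : ∀ i ∈ s.erase i₀, x i ≠ x i₀ := fun i hi h =>
    (hmem i hi).2 (hxinj (hmem i hi).1 hi₀ h)
  have htransfer : ∀ j ∈ s.erase i₀, ∀ i ∈ s.erase i₀,
      M.IsBase (insert (y j) (insert (y i₀) (B \ {x i₀}) \ {x i})) ↔
        M.IsBase (insert (y j) (B \ {x i})) := by
    intro j hj i hi
    obtain ⟨hjs, hji₀⟩ := hmem j hj
    have hlt : κ i₀ < κ j := (hmin j hjs).lt_of_ne fun h => hji₀ (hκ hi₀ hjs h).symm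
    exact hB.insert_sdiff_isBase_iff_of_exchange (hx i₀ hi₀) (hexch i₀ hi₀)
      ((hexch j hjs).subset_ground (.inl rfl)) (hy j hjs) (fun h => hji₀ (hyinj hjs hi₀ h))
      (htri i₀ hi₀ j hjs hlt) (hx i (hmem i hi).1) (hxne i hi)
  have key := ih (s.erase i₀) (Finset.erase_ssubset hi₀) (hexch i₀ hi₀)
    (fun i hi => .inr ⟨hx i (hmem i hi).1, hxne i hi⟩)
    (fun i hi => by
      simpa [hy i (hmem i hi).1] using fun h => (hmem i hi).2 (hyinj (hmem i hi).1 hi₀ h))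
    (hxinj.mono (by simp)) (hyinj.mono (by simp)) (hκ.mono (by simp))
    (fun i hi => (htransfer i hi i hi).2 (hexch i (hmem i hi).1))
    (fun i hi j hj hij => (htransfer j hj i hi).not.2 (htri i (hmem i hi).1 j (hmem j hj).1 hij))
  have hy₀ : y i₀ ∉ x '' ↑(s.erase i₀) := fun ⟨i, hi, hxy⟩ =>
    hy i₀ hi₀ (hxy ▸ hx i (Finset.mem_of_mem_erase hi))
  rwa [Set.insert_sdiff_singleton_sdiff_union hy₀, ← Set.image_insert_eq, ← Set.image_insert_eq,
    ← Finset.coe_insert, Finset.insert_erase hi₀] at key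

/-- The elements of `B` that can be exchanged for `e` form its fundamental circuit. -/
theorem IsBase.mem_closure_of_forall_exchange (hB : M.IsBase B) (he : e ∈ M.E) (heB : e ∉ B)
    (hX : ∀ x ∈ B, M.IsBase (insert e (B \ {x})) → x ∈ X) : e ∈ M.closure X := by
  have hC := hB.fundCircuit_isCircuit he heB
  refine M.closure_subset_closure (fun z hz => ?_)
    (hC.mem_closure_sdiff_singleton_of_mem (M.mem_fundCircuit e B))
  obtain ⟨hz, hze⟩ := hz
  obtain rfl | hzB := M.fundCircuit_subset_insert e B hz
  · exact absurd rfl hze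
  · exact hX z hzB ((hB.insert_sdiff_isBase_iff_mem_fundCircuit he heB hzB).2 hz)

theorem Indep.encard_le_encard_of_subset_closure (hI : M.Indep I) (hX : M.Indep X)
    (h : I ⊆ M.closure X) : I.encard ≤ X.encard := by
  rw [← hI.eRk_eq_encard, ← hX.eRk_eq_encard, ← M.eRk_closure_eq X]
  exact M.eRk_mono h

end Matroid

namespace FinMatroid

variable (M : FinMatroid α) {B B' D R : Finset α}

def toMatroid : Matroid α :=
  Matroid.ofIsBaseOfFinite M.E.finite_toSet (fun X => ∃ B, M.Bases B ∧ ↑B = X)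
    (let ⟨B, hB⟩ := M.bases_nonempty; ⟨B, B, hB, rfl⟩)
    (by
      rintro _ _ ⟨B, hB, rfl⟩ ⟨B', hB', rfl⟩ x ⟨hxB, hxB'⟩
      obtain ⟨y, hyB', hyB, hBy⟩ := M.basis_exchange B B' hB hB' x hxB hxB'
      exact ⟨y, ⟨hyB', hyB⟩, _, hBy, by push_cast; rfl⟩)
    (by rintro _ ⟨B, hB, rfl⟩; exact_mod_cast M.bases_subset_ground B hB)

@[simp] theorem toMatroid_isBase_coe : M.toMatroid.IsBase ↑B ↔ M.Bases B :=
  ⟨fun ⟨_, hB, h⟩ => Finset.coe_injective h ▸ hB, fun hB => ⟨B, hB, rfl⟩⟩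

theorem toMatroid_isBase_insert_sdiff {e x : α} :
    M.toMatroid.IsBase (insert e (↑B \ {x})) ↔ M.Bases (insert e (B.erase x)) := by
  rw [← toMatroid_isBase_coe]
  push_cast
  rfl

variable {M}

theorem card_eq_of_bases (hB : M.Bases B) (hB' : M.Bases B') : B.card = B'.card := by
  simpa [Set.encard_coe_eq_coe_finsetCard] using
    ((M.toMatroid_isBase_coe).2 hB).encard_eq_encard_of_isBase ((M.toMatroid_isBase_coe).2 hB')

theorem rev_exchange (hB : M.Bases B) (hB' : M.Bases B') {e : α} (heB' : e ∈ B')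
    (heB : e ∉ B) : ∃ x ∈ B, x ∉ B' ∧ M.Bases (insert e (B.erase x)) := by
  obtain ⟨x, ⟨hxB, hxB'⟩, hx⟩ := ((M.toMatroid_isBase_coe).2 hB).rev_exchange
    ((M.toMatroid_isBase_coe).2 hB') (e := e) ⟨heB', heB⟩
  exact ⟨x, hxB, hxB', (M.toMatroid_isBase_insert_sdiff).1 hx⟩

theorem bases_sdiff_image_union_image {ι γ : Type*} [LinearOrder γ] (hB : M.Bases B)
    {s : Finset ι} {x y : ι → α} {κ : ι → γ} (hx : ∀ i ∈ s, x i ∈ B) (hy : ∀ i ∈ s, y i ∉ B)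
    (hxinj : Set.InjOn x s) (hyinj : Set.InjOn y s) (hκ : Set.InjOn κ s)
    (hexch : ∀ i ∈ s, M.Bases (insert (y i) (B.erase (x i))))
    (htri : ∀ i ∈ s, ∀ j ∈ s, κ i < κ j → ¬ M.Bases (insert (y j) (B.erase (x i)))) :
    M.Bases (B \ s.image x ∪ s.image y) := by
  rw [← toMatroid_isBase_coe]
  push_cast
  exact ((M.toMatroid_isBase_coe).2 hB).sdiff_image_union_image_isBase hx hy hxinj hyinj hκ
    (fun i hi => (M.toMatroid_isBase_insert_sdiff).2 (hexch i hi))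
    fun i hi j hj hij => (M.toMatroid_isBase_insert_sdiff).not.2 (htri i hi j hj hij)

/-- The hypothesis makes `B \ R` span `D \ R`. -/
theorem card_inter_le_card_inter (hB : M.Bases B) (hD : M.Bases D)
    (hR : ∀ x ∈ B, x ∈ R → ∀ e ∈ D, e ∉ B → M.Bases (insert e (B.erase x)) → e ∈ R) :
    (B ∩ R).card ≤ (D ∩ R).card := by
  have hB' := (M.toMatroid_isBase_coe).2 hB
  have hspan : (↑(D \ R) : Set α) ⊆ M.toMatroid.closure ↑(B \ R) := by
    intro e he
    obtain ⟨heD, heR⟩ := Finset.mem_sdiff.1 he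
    by_cases heB : e ∈ B
    · exact M.toMatroid.subset_closure _ (hB'.indep.subset (by simp)).subset_ground
        (Finset.mem_coe.2 (Finset.mem_sdiff.2 ⟨heB, heR⟩))
    refine hB'.mem_closure_of_forall_exchange (M.bases_subset_ground D hD heD) heB
      fun x hxB hbase => Finset.mem_coe.2 (Finset.mem_sdiff.2 ⟨hxB, fun hxR => heR ?_⟩)
    exact hR x hxB hxR e heD heB ((M.toMatroid_isBase_insert_sdiff).1 hbase)
  have hD' := (M.toMatroid_isBase_coe).2 hD
  have hcard := (hD'.indep.subset (by simp)).encard_le_encard_of_subset_closure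
    (hB'.indep.subset (by simp)) hspan
  rw [Set.encard_coe_eq_coe_finsetCard, Set.encard_coe_eq_coe_finsetCard, Nat.cast_le] at hcard
  have := card_eq_of_bases hB hD
  have := Finset.card_inter_add_card_sdiff B R
  have := Finset.card_inter_add_card_sdiff D R
  omega

end FinMatroid

section Walks

variable {β : Type*} {r : β → β → Prop} {x : ℕ → β} {m n : ℕ}

def IsWalk (r : β → β → Prop) (x : ℕ → β) (n : ℕ) : Prop :=
  ∀ t < n, r (x t) (x (t + 1))

theorem IsWalk.mono (hx : IsWalk r x n) (h : m ≤ n) : IsWalk r x m :=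
  fun t ht => hx t (by omega)

theorem IsWalk.drop (hx : IsWalk r x n) (s : ℕ) : IsWalk r (fun j => x (s + j)) (n - s) :=
  fun t ht => hx (s + t) (by omega)

theorem IsWalk.imp {r' : β → β → Prop} (h : ∀ u v, r u v → r' u v) (hx : IsWalk r x n) :
    IsWalk r' x n :=
  fun t ht => h _ _ (hx t ht)

theorem IsWalk.append {y : ℕ → β} (hx : IsWalk r x m) (hy : IsWalk r y n) (hxy : y 0 = x m) :
    IsWalk r (fun t => if t ≤ m then x t else y (t - m)) (m + n) := by
  intro t ht
  rcases Nat.lt_or_ge t m with htm | htm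
  · simpa [htm.le, Nat.succ_le_of_lt htm] using hx t htm
  · have := hy (t - m) (by omega)
    rcases htm.lt_or_eq with htm | rfl
    · simpa [htm.not_ge, show ¬ t + 1 ≤ m by omega, show t + 1 - m = t - m + 1 by omega]
        using this
    · simpa [hxy] using this

theorem IsWalk.shortcut (hx : IsWalk r x n) {p q : ℕ} (hpq : p ≤ q) (hq : q < n)
    (h : r (x p) (x (q + 1))) :
    ∃ y, IsWalk r y (n - (q - p)) ∧ (∀ j ≤ p, y j = x j) ∧ y (n - (q - p)) = x n := by
  refine ⟨fun j => if j ≤ p then x j else x (j + (q - p)), fun t ht => ?_,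
    fun j hj => if_pos hj, by simp only; rw [if_neg (by omega)]; congr 1; omega⟩
  simp only
  by_cases htp : t + 1 ≤ p
  · rw [if_pos (by omega), if_pos htp]
    exact hx t (by omega)
  by_cases htp' : t = p
  · subst htp'
    rw [if_pos le_rfl, if_neg htp, show t + 1 + (q - t) = q + 1 by omega]
    exact h
  · rw [if_neg (by omega), if_neg htp, show t + 1 + (q - p) = t + (q - p) + 1 by omega]
    exact hx _ (by omega)

theorem IsWalk.rotate (hx : IsWalk r x m) (hc : x m = x 0) {j : ℕ} (hj : j ≤ m) :
    ∃ y, IsWalk r y m ∧ y m = y 0 ∧ y 0 = x j := by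
  rcases Nat.eq_zero_or_pos m with rfl | hm
  · exact ⟨x, hx, rfl, by rw [Nat.le_zero.1 hj]⟩
  refine ⟨fun t => x ((j + t) % m), fun t ht => ?_, by simp, ?_⟩
  · have hsucc : (j + (t + 1)) % m = ((j + t) % m + 1) % m := by
      rw [Nat.mod_add_mod, add_assoc]
    simp only [hsucc]
    rcases Nat.lt_or_ge ((j + t) % m + 1) m with h | h
    · rw [Nat.mod_eq_of_lt h]
      exact hx _ (by omega)
    · have h' : (j + t) % m + 1 = m := le_antisymm (Nat.mod_lt _ hm) h
      rw [h', Nat.mod_self, ← hc]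
      simpa only [h'] using hx ((j + t) % m) (by omega)
  · rcases Nat.lt_or_ge j m with h | h
    · simp [Nat.mod_eq_of_lt h]
    · simp [le_antisymm hj h, hc]

theorem Relation.ReflTransGen.exists_isWalk {a b : β} (h : Relation.ReflTransGen r a b) :
    ∃ n x, x 0 = a ∧ x n = b ∧ IsWalk r x n := by
  induction h with
  | refl => exact ⟨0, fun _ => a, rfl, rfl, fun t ht => absurd ht (Nat.not_lt_zero t)⟩
  | @tail b c _ hbc ih =>
    obtain ⟨n, x, hx0, hxn, hx⟩ := ih
    refine ⟨n + 1, fun t => if t ≤ n then x t else c, by simpa using hx0, by simp,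
      fun t ht => ?_⟩
    simp only
    rcases Nat.lt_or_ge t n with h | h
    · rw [if_pos h.le, if_pos (by omega : t + 1 ≤ n)]
      exact hx t h
    · rw [if_pos (by omega), if_neg (by omega), show t = n by omega, hxn]
      exact hbc

theorem exists_closed_isWalk {S : Set β} (hS : S.Finite) {a : β} (ha : a ∈ S)
    (hsucc : ∀ u ∈ S, ∃ v ∈ S, r u v) : ∃ x m, 0 < m ∧ x m = x 0 ∧ IsWalk r x m := by
  have : Finite S := hS
  choose f hfS hf using hsucc
  let g : S → S := fun u => ⟨f u u.2, hfS u u.2⟩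
  obtain ⟨i, j, hij, he⟩ := Finite.exists_ne_map_eq_of_infinite fun t : ℕ => g^[t] ⟨a, ha⟩
  wlog hlt : i < j generalizing i j
  · exact this j i hij.symm he.symm (by omega)
  refine ⟨fun t => (g^[i + t] ⟨a, ha⟩).1, j - i, by omega,
    by simp [← he, show i + (j - i) = j by omega], fun t _ => ?_⟩
  simp only [← add_assoc, Function.iterate_succ_apply']
  exact hf _ _

theorem IsWalk.not_chord_of_minimal (hx : IsWalk r x m) (hxc : x m = x 0)
    (hmin : ∀ y L, 0 < L → y L = y 0 → IsWalk r y L → m ≤ L) {a b : ℕ} (hab : a < b)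
    (hbm : b < m) : ¬ r (x a) (x (b + 1)) := by
  intro h
  obtain ⟨y, hy, hya, hyL⟩ := hx.shortcut hab.le hbm h
  have := hmin y (m - (b - a)) (by omega) (by rw [hyL, hya 0 (Nat.zero_le _), hxc]) hy
  omega

theorem IsWalk.eq_of_minimal (hx : IsWalk r x m)
    (hmin : ∀ y L, 0 < L → y L = y 0 → IsWalk r y L → m ≤ L) {s t : ℕ} (hst : s < t)
    (htm : t ≤ m) (he : x s = x t) : s = 0 ∧ t = m := by
  by_contra hne
  have := hmin (fun j => x (s + j)) (t - s) (by omega)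
    (by rw [show s + (t - s) = t by omega, add_zero, he]) ((hx.drop s).mono (by omega))
  omega

theorem IsWalk.not_chord_of_minimal_escape {F : β → Prop} (hx : IsWalk r x n) (hF : F (x n))
    (hmin : ∀ j ≤ m, ∀ y L, y 0 = x j → IsWalk r y L → F (y L) → n - m ≤ L) {a b : ℕ}
    (hab : a < b) (hmb : m < b) (hbn : b < n) : ¬ r (x a) (x (b + 1)) := by
  intro h
  obtain ⟨y, hy, hya, hyL⟩ := hx.shortcut hab.le hbn h
  have := hmin (min a m) (min_le_right _ _) (fun j => y (min a m + j))
    (n - (b - a) - min a m) (by simp [hya _ (min_le_left _ _)]) (hy.drop _)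
    (by rw [show min a m + (n - (b - a) - min a m) = n - (b - a) by omega, hyL]; exact hF)
  omega

theorem IsWalk.ne_of_minimal_escape {F : β → Prop} (hx : IsWalk r x n) (hF : F (x n))
    (hmin : ∀ j ≤ m, ∀ y L, y 0 = x j → IsWalk r y L → F (y L) → n - m ≤ L) {s t : ℕ}
    (hst : s < t) (hmt : m < t) (htn : t ≤ n) : x s ≠ x t := by
  intro he
  rcases htn.lt_or_eq with htn | rfl
  · exact hx.not_chord_of_minimal_escape hF hmin hst hmt htn (he ▸ hx t htn)
  have := hmin (min s m) (min_le_right _ _) (fun j => x (min s m + j)) (s - min s m) rfl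
    ((hx.drop _).mono (by omega))
    (by rw [show min s m + (s - min s m) = s by omega, he]; exact hF)
  omega

end Walks

section Reconfiguration

variable {M : Fin k → FinMatroid α} {X Y : Fin k → Finset α}

def ReconfigAdj (M : Fin k → FinMatroid α) (X Y : Fin k → Finset α) : Prop :=
  FeasibleSeq M X ∧ FeasibleSeq M Y ∧ AdjacentSeq M X Y

theorem AdjacentSeq.symm (hX : FeasibleSeq M X) (h : AdjacentSeq M X Y) : AdjacentSeq M Y X := by
  obtain ⟨i, hXY, x, hx, y, -, hyX, hYi⟩ := h
  have hyx : y ∉ (X i).erase x := fun h => hyX (Finset.mem_of_mem_erase h)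
  refine ⟨i, fun j hj => (hXY j hj).symm, y, hYi ▸ Finset.mem_insert_self y _, x,
    (M i).bases_subset_ground _ (hX.1 i) hx, ?_, ?_⟩
  · rw [hYi, Finset.mem_insert, not_or]
    exact ⟨fun h => hyX (h ▸ hx), Finset.notMem_erase x _⟩
  · rw [hYi, Finset.erase_insert hyx, Finset.insert_erase hx]

theorem adjacentSeq_update {i : Fin k} {x y : α} (hx : x ∈ X i) (hyE : y ∈ (M i).E)
    (hy : y ∉ X i) : AdjacentSeq M X (Function.update X i (insert y ((X i).erase x))) :=
  ⟨i, fun _ hj => (Function.update_of_ne hj _ _).symm, x, hx, y, hyE, hy,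
    Function.update_self ..⟩

theorem ReconfigAdj.symm (h : ReconfigAdj M X Y) : ReconfigAdj M Y X :=
  ⟨h.2.1, h.1, h.2.2.symm h.1⟩

theorem Relation.ReflTransGen.reconfigAdj_symm (h : Relation.ReflTransGen (ReconfigAdj M) X Y) :
    Relation.ReflTransGen (ReconfigAdj M) Y X :=
  Relation.ReflTransGen.mono (fun _ _ h => ReconfigAdj.symm h) _ _ (Relation.reflTransGen_swap.2 h)

theorem reconfigurable_of_reflTransGen (h : Relation.ReflTransGen (ReconfigAdj M) X Y)
    (hX : FeasibleSeq M X) : Reconfigurable M X Y := by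
  obtain ⟨n, f, h0, hn, hf⟩ := h.exists_isWalk
  refine ⟨n, f, h0, hn, fun t ht => ?_, fun t ht => (hf t ht).2.2⟩
  rcases t with _ | t
  · exact h0 ▸ hX
  · exact (hf t (by omega)).2.1

end Reconfiguration

section UnionMatroid

variable {M : Fin k → FinMatroid α} {B B' X Y : Fin k → Finset α}

theorem FeasibleSeq.card_biUnion_inter (hB : FeasibleSeq M B) (R : Finset α) :
    (Finset.univ.biUnion B ∩ R).card = ∑ i, (B i ∩ R).card := by
  rw [Finset.biUnion_inter, Finset.card_biUnion]
  exact fun i _ j _ hij => (hB.2 i j hij).mono Finset.inter_subset_left Finset.inter_subset_left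

theorem IsUnionCandidate.card_le (hB : FeasibleSeq M B) {V : Finset α}
    (hV : IsUnionCandidate M V) : V.card ≤ (Finset.univ.biUnion B).card := by
  obtain ⟨b, hb, rfl⟩ := hV
  calc (Finset.univ.biUnion b).card ≤ ∑ i, (b i).card := Finset.card_biUnion_le
    _ = ∑ i, (B i).card :=
      Finset.sum_congr rfl fun i _ => FinMatroid.card_eq_of_bases (hb i) (hB.1 i)
    _ = (Finset.univ.biUnion B).card :=
      (Finset.card_biUnion fun i _ j _ hij => hB.2 i j hij).symm

theorem FeasibleSeq.isUnionBasis (hB : FeasibleSeq M B) :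
    IsUnionBasis M (Finset.univ.biUnion B) :=
  ⟨⟨B, hB.1, rfl⟩, fun _ hV hsub => Finset.eq_of_subset_of_card_le hsub (hV.card_le hB)⟩

theorem exists_bases_biUnion_supset_of_not_disjoint (hB : FeasibleSeq M B) {b : Fin k → Finset α}
    (hb : ∀ i, (M i).Bases (b i)) {c c' : Fin k} (hcc' : c ≠ c') {x : α} (hxc : x ∈ b c)
    (hxc' : x ∈ b c') (hxBc : x ∉ B c) :
    ∃ b' : Fin k → Finset α, (∀ i, (M i).Bases (b' i)) ∧
      ∑ i, (b' i \ B i).card < ∑ i, (b i \ B i).card ∧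
      Finset.univ.biUnion b ⊆ Finset.univ.biUnion b' := by
  obtain ⟨w, hwB, -, hbw⟩ := (M c).basis_exchange (b c) (B c) (hb c) (hB.1 c) x hxc hxBc
  have hc : insert w ((b c).erase x) \ B c = (b c \ B c).erase x := by
    ext z
    by_cases hz : z = w <;> simp [hz, hwB, and_assoc]
  refine ⟨Function.update b c (insert w ((b c).erase x)), fun i => ?_,
    Finset.sum_lt_sum (fun i _ => ?_) ⟨c, Finset.mem_univ c, ?_⟩, fun z hz => ?_⟩
  · by_cases hi : i = c
    · subst hi; simpa using hbw
    · simpa [hi] using hb i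
  · by_cases hi : i = c
    · subst hi
      simpa [hc] using Finset.card_erase_le
    · simp [hi]
  · simpa [hc] using Finset.card_erase_lt_of_mem (Finset.mem_sdiff.2 ⟨hxc, hxBc⟩)
  obtain ⟨a, -, hza⟩ := Finset.mem_biUnion.1 hz
  refine Finset.mem_biUnion.2 ?_
  by_cases ha : a = c
  · subst ha
    by_cases hzx : z = x
    · exact ⟨c', Finset.mem_univ _, by simpa [hcc'.symm, hzx] using hxc'⟩
    · exact ⟨a, Finset.mem_univ _, by simp [hzx, hza]⟩
  · exact ⟨a, Finset.mem_univ _, by simpa [ha] using hza⟩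

theorem exists_feasibleSeq_biUnion_supset (hB : FeasibleSeq M B) {b : Fin k → Finset α}
    (hb : ∀ i, (M i).Bases (b i)) :
    ∃ D, FeasibleSeq M D ∧ Finset.univ.biUnion b ⊆ Finset.univ.biUnion D := by
  induction hn : ∑ i, (b i \ B i).card using Nat.strong_induction_on generalizing b with
  | _ n ih =>
  by_cases hdisj : ∀ i j, i ≠ j → Disjoint (b i) (b j)
  · exact ⟨b, ⟨hb, hdisj⟩, subset_rfl⟩
  simp only [not_forall] at hdisj
  obtain ⟨i, j, hij, hnd⟩ := hdisj
  obtain ⟨x, hxi, hxj⟩ := Finset.not_disjoint_iff.1 hnd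
  obtain ⟨b', hb', hlt, hsub⟩ : ∃ b' : Fin k → Finset α, (∀ i, (M i).Bases (b' i)) ∧
      ∑ i, (b' i \ B i).card < ∑ i, (b i \ B i).card ∧
      Finset.univ.biUnion b ⊆ Finset.univ.biUnion b' := by
    by_cases hxB : x ∈ B i
    · exact exists_bases_biUnion_supset_of_not_disjoint hB hb hij.symm hxj hxi
        (Finset.disjoint_left.1 (hB.2 i j hij) hxB)
    · exact exists_bases_biUnion_supset_of_not_disjoint hB hb hij hxi hxj hxB
  obtain ⟨D, hD, hsub'⟩ := ih _ (hn ▸ hlt) hb' rfl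
  exact ⟨D, hD, hsub.trans hsub'⟩

theorem IsUnionBasis.exists_feasibleSeq (hB : FeasibleSeq M B) {V : Finset α}
    (hV : IsUnionBasis M V) : ∃ D, FeasibleSeq M D ∧ V = Finset.univ.biUnion D := by
  obtain ⟨⟨b, hb, rfl⟩, hmax⟩ := hV
  obtain ⟨D, hD, hsub⟩ := exists_feasibleSeq_biUnion_supset hB hb
  exact ⟨D, hD, hmax _ ⟨D, hD.1, rfl⟩ hsub⟩

theorem IsUnionColoop.mem_of_eq_of_ne {i j : Fin k} {z : α} (hz : IsUnionColoop M z)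
    (hX : FeasibleSeq M X) (hY : FeasibleSeq M Y) (hXY : ∀ l, l ≠ i → X l = Y l)
    (hzX : z ∈ X j) : z ∈ Y j := by
  obtain ⟨c, -, hzY⟩ := Finset.mem_biUnion.1 (hz _ hY.isUnionBasis)
  by_cases hcj : c = j
  · exact hcj ▸ hzY
  by_cases hci : c = i
  · subst hci
    have hji : j ≠ c := Ne.symm hcj
    exact absurd hzY (Finset.disjoint_left.1 (hY.2 j c hji) (hXY j hji ▸ hzX))
  · exact absurd hzX (Finset.disjoint_left.1 (hX.2 c j hcj) (hXY c hci ▸ hzY))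

theorem AdjacentSeq.coloop_inter_eq (hX : FeasibleSeq M X) (hY : FeasibleSeq M Y)
    (h : AdjacentSeq M X Y) (j : Fin k) :
    {x | IsUnionColoop M x} ∩ (X j : Set α) = {x | IsUnionColoop M x} ∩ (Y j : Set α) := by
  obtain ⟨i, hXY, -⟩ := h
  ext z
  exact and_congr_right fun hz => ⟨hz.mem_of_eq_of_ne hX hY hXY,
    hz.mem_of_eq_of_ne hY hX fun l hl => (hXY l hl).symm⟩

theorem Reconfigurable.coloop_inter_eq (h : Reconfigurable M B B') (j : Fin k) :
    {x | IsUnionColoop M x} ∩ (B j : Set α) = {x | IsUnionColoop M x} ∩ (B' j : Set α) := by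
  obtain ⟨ℓ, f, rfl, rfl, hf, hadj⟩ := h
  induction ℓ with
  | zero => rfl
  | succ ℓ ih =>
    rw [ih (fun t ht => hf t (by omega)) fun t ht => hadj t (by omega)]
    exact (hadj ℓ (by omega)).coloop_inter_eq (hf ℓ (by omega)) (hf (ℓ + 1) le_rfl) j

/-- If no free vertex is reachable from `y`, the reachable set `R` lies in `⋃ B` and no arc
leaves it, so each `D c` meets `R` at least as often as `B c` does; summing over the disjoint
`D c`, every union basis `⋃ D` contains `R`. -/
theorem FeasibleSeq.isUnionColoop_of_not_reachable (hB : FeasibleSeq M B) {y : α}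
    (hy : y ∈ Finset.univ.biUnion B)
    (h : ∀ v, Relation.ReflTransGen (Function.curry (ArcD M B)) y v → ¬ FreeVertex M B v) :
    IsUnionColoop M y := by
  classical
  intro V hV
  obtain ⟨D, hD, rfl⟩ := hV.exists_feasibleSeq hB
  set R := (Finset.univ.biUnion B).filter (Relation.ReflTransGen (Function.curry (ArcD M B)) y)
  have hR : ∀ c v, Relation.ReflTransGen (Function.curry (ArcD M B)) y v → v ∈ (M c).E →
      v ∈ R := by
    refine fun c v hv hvE => Finset.mem_filter.2 ⟨?_, hv⟩
    by_contra hvB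
    exact h v hv ⟨Finset.mem_biUnion.2 ⟨c, Finset.mem_univ c, hvE⟩,
      fun i hi => hvB (Finset.mem_biUnion.2 ⟨i, Finset.mem_univ i, hi⟩)⟩
  have hcard : ∀ c, (B c ∩ R).card ≤ (D c ∩ R).card := fun c =>
    FinMatroid.card_inter_le_card_inter (hB.1 c) (hD.1 c) fun x hxB hxR e heD heB hbase =>
      have heE := (M c).bases_subset_ground _ (hD.1 c) heD
      hR c e ((Finset.mem_filter.1 hxR).2.tail ⟨c, hxB, heE, heB, hbase⟩) heE
  have hRD : R.card ≤ (Finset.univ.biUnion D ∩ R).card := by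
    have hBR : Finset.univ.biUnion B ∩ R = R := Finset.inter_eq_right.2 (Finset.filter_subset _ _)
    rw [hD.card_biUnion_inter, ← hBR, hB.card_biUnion_inter, hBR]
    exact Finset.sum_le_sum fun c _ => hcard c
  have hRD' := Finset.eq_of_subset_of_card_le Finset.inter_subset_right hRD
  exact Finset.inter_eq_right.1 hRD' (Finset.mem_filter.2 ⟨hy, .refl⟩)

theorem FeasibleSeq.exists_isWalk_to_free (hB : FeasibleSeq M B) {y : α} {i : Fin k}
    (hy : y ∈ B i) (hyK : ¬ IsUnionColoop M y) :
    ∃ n x, x 0 = y ∧ IsWalk (Function.curry (ArcD M B)) x n ∧ FreeVertex M B (x n) := by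
  by_contra h
  refine hyK (hB.isUnionColoop_of_not_reachable (Finset.mem_biUnion.2 ⟨i, Finset.mem_univ i, hy⟩)
    fun v hv hfree => h ?_)
  obtain ⟨n, x, hx0, hxn, hx⟩ := hv.exists_isWalk
  exact ⟨n, x, hx0, hx, hxn ▸ hfree⟩

end UnionMatroid

section Tadpole

variable {M : Fin k → FinMatroid α} {B B' : Fin k → Finset α}

/-- An arc of `D(𝕄, 𝔹)` whose head lies in the target basis `B' i` of its own matroid. -/
def AlignedArc (M : Fin k → FinMatroid α) (B B' : Fin k → Finset α) (u v : α) : Prop :=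
  ∃ i, ArcOf M B i (u, v) ∧ v ∈ B' i

theorem ArcOf.eq_of_mem (hB : FeasibleSeq M B) {i c : Fin k} {a : α × α}
    (h : ArcOf M B i a) (hc : a.1 ∈ B c) : i = c := by
  by_contra hne
  exact Finset.disjoint_left.1 (hB.2 i c hne) h.1 hc

theorem arcD_iff_arcOf (hB : FeasibleSeq M B) {c : Fin k} {u v : α} (hu : u ∈ B c) :
    ArcD M B (u, v) ↔ ArcOf M B c (u, v) :=
  ⟨fun ⟨_, h⟩ => h.eq_of_mem hB hu ▸ h, fun h => ⟨c, h⟩⟩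

theorem exists_alignedArc (hB : FeasibleSeq M B) (hB' : FeasibleSeq M B')
    (hJ : Finset.univ.biUnion B = Finset.univ.biUnion B') {c : Fin k} {u : α}
    (hu : u ∈ B c) (hu' : u ∉ B' c) :
    ∃ v c', v ∈ B c' ∧ v ∉ B' c' ∧ AlignedArc M B B' u v := by
  obtain ⟨v, hvB', hvB, hbase⟩ := (M c).basis_exchange _ _ (hB.1 c) (hB'.1 c) u hu hu'
  obtain ⟨c', -, hvc'⟩ := Finset.mem_biUnion.1
    (hJ ▸ Finset.mem_biUnion.2 ⟨c, Finset.mem_univ c, hvB'⟩ : v ∈ Finset.univ.biUnion B)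
  have hcc' : c' ≠ c := fun h => hvB (h ▸ hvc')
  exact ⟨v, c', hvc', Finset.disjoint_right.1 (hB'.2 c' c hcc') hvB',
    c, ⟨hu, (M c).bases_subset_ground _ (hB'.1 c) hvB', hvB, hbase⟩, hvB'⟩

theorem exists_closed_alignedWalk (hB : FeasibleSeq M B) (hB' : FeasibleSeq M B')
    (hJ : Finset.univ.biUnion B = Finset.univ.biUnion B') {c : Fin k} {u : α}
    (hu : u ∈ B c) (hu' : u ∉ B' c) :
    ∃ m x, 0 < m ∧ x m = x 0 ∧ IsWalk (AlignedArc M B B') x m := by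
  have hfin : {v | ∃ c, v ∈ B c ∧ v ∉ B' c}.Finite :=
    (Finset.univ.biUnion B).finite_toSet.subset fun v ⟨c, hv, _⟩ =>
      Finset.mem_biUnion.2 ⟨c, Finset.mem_univ c, hv⟩
  obtain ⟨x, m, hm, hxc, hx⟩ := exists_closed_isWalk hfin ⟨c, hu, hu'⟩ fun v ⟨c, hv, hv'⟩ =>
    let ⟨w, c', hw, hw', hvw⟩ := exists_alignedArc hB hB' hJ hv hv'
    ⟨w, ⟨c', hw, hw'⟩, hvw⟩
  exact ⟨m, x, hm, hxc, hx⟩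

/-- Each vertex of a closed aligned walk is the head of an aligned arc. -/
theorem notMem_of_closed_alignedWalk (hB' : FeasibleSeq M B') {x : ℕ → α} {m t : ℕ}
    (hx : IsWalk (AlignedArc M B B') x m) (hxc : x m = x 0) (ht : t < m) {c : Fin k}
    (hxt : x t ∈ B c) : x t ∉ B' c := by
  obtain ⟨c', hc', hxc'⟩ : ∃ c', x t ∈ B' c' ∧ x t ∉ B c' := by
    obtain ⟨s, hs, hst⟩ : ∃ s < m, x (s + 1) = x t := by
      rcases t with _ | t
      · exact ⟨m - 1, by omega, by rw [show m - 1 + 1 = m by omega, hxc]⟩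
      · exact ⟨t, by omega, rfl⟩
    obtain ⟨c', ⟨-, -, h, -⟩, h'⟩ := hx s hs
    exact ⟨c', hst ▸ h', hst ▸ h⟩
  have hcc' : c' ≠ c := fun h => hxc' (h ▸ hxt)
  exact Finset.disjoint_left.1 (hB'.2 c' c hcc') hc'

/-- A shortcut would give a shorter closed aligned walk or a shorter escape to a free vertex. -/
theorem TadpoleWalk.shortcutFree_of_minimal (hB : FeasibleSeq M B) (W : TadpoleWalk M B)
    (hal : IsWalk (AlignedArc M B B') W.x W.m)
    (hmin_m : ∀ y L, 0 < L → y L = y 0 → IsWalk (AlignedArc M B B') y L → W.m ≤ L)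
    (hmin_ℓ : ∀ j ≤ W.m, ∀ y L, y 0 = W.x j → IsWalk (Function.curry (ArcD M B)) y L →
      FreeVertex M B (y L) → W.n - W.m ≤ L) :
    ShortcutFree W := by
  intro i a _ b hb _ harc_b hprec hchord
  obtain ⟨hb0m, hab⟩ := hprec
  set a' := if a = W.m then 0 else a
  have hxa' : W.x a' = W.x a := by
    by_cases h : a = W.m
    · simp only [a', if_pos h, h, W.closed]
    · simp only [a', if_neg h]
  have ha'b : a' < b := by
    simp only [a']
    split_ifs <;> omega
  rw [← hxa'] at hchord
  rcases Nat.lt_or_ge b W.m with hbm | hbm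
  · obtain ⟨c, hc, hcB'⟩ := hal b hbm
    have hci : c = i := hc.eq_of_mem hB harc_b.1
    exact hal.not_chord_of_minimal W.closed hmin_m ha'b hbm ⟨i, hchord, hci ▸ hcB'⟩
  · exact IsWalk.not_chord_of_minimal_escape (r := Function.curry (ArcD M B)) W.arc
      W.last_free hmin_ℓ ha'b (by omega) hb ⟨i, hchord⟩

theorem exists_tadpoleWalk_of_minimal {x p : ℕ → α} {m ℓ : ℕ}
    (hm : 0 < m) (hxc : x m = x 0) (hx : IsWalk (AlignedArc M B B') x m)
    (hmin_m : ∀ y L, 0 < L → y L = y 0 → IsWalk (AlignedArc M B B') y L → m ≤ L)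
    (hp0 : p 0 = x 0) (hp : IsWalk (Function.curry (ArcD M B)) p ℓ)
    (hpF : FreeVertex M B (p ℓ))
    (hmin_ℓ : ∀ j ≤ m, ∀ y L, y 0 = x j → IsWalk (Function.curry (ArcD M B)) y L →
      FreeVertex M B (y L) → ℓ ≤ L) :
    ∃ W : TadpoleWalk M B, W.m = m ∧ W.n = m + ℓ ∧ ∀ t ≤ m, W.x t = x t := by
  set w : ℕ → α := fun t => if t ≤ m then x t else p (t - m)
  have hw_le : ∀ t ≤ m, w t = x t := fun t ht => if_pos ht
  have hℓ : ℓ ≠ 0 := by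
    obtain ⟨c, ⟨hx0, -⟩, -⟩ := hx 0 hm
    exact fun hℓ => hpF.2 c (by rwa [hℓ, hp0])
  have hwF : FreeVertex M B (w (m + ℓ)) := by simpa [w, hℓ] using hpF
  have hwD : IsWalk (Function.curry (ArcD M B)) w (m + ℓ) :=
    (hx.imp fun _ _ ⟨c, hc, _⟩ => ⟨c, hc⟩).append hp (hp0.trans hxc.symm)
  have hmin : ∀ j ≤ m, ∀ y L, y 0 = w j → IsWalk (Function.curry (ArcD M B)) y L →
      FreeVertex M B (y L) → m + ℓ - m ≤ L := fun j hj y L hy0 hy hyF => by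
    rw [Nat.add_sub_cancel_left]
    exact hmin_ℓ j hj y L (hy0.trans (hw_le j hj)) hy hyF
  refine ⟨⟨m + ℓ, m, w, by omega, by rw [hw_le m le_rfl, hw_le 0 hm.le, hxc], hwD,
    fun s t hst htn he => ?_, hwF⟩, rfl, rfl, hw_le⟩
  by_cases htm : t ≤ m
  · rw [hw_le s (by omega), hw_le t htm] at he
    exact hx.eq_of_minimal hmin_m hst htm he
  · exact absurd he (hwD.ne_of_minimal_escape hwF hmin hst (by omega) htn)

theorem exists_shortcutFree_tadpoleWalk (hB : FeasibleSeq M B) (hB' : FeasibleSeq M B')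
    (hJ : Finset.univ.biUnion B = Finset.univ.biUnion B')
    (hK : ∀ i, {x | IsUnionColoop M x} ∩ (B i : Set α) = {x | IsUnionColoop M x} ∩ (B' i : Set α))
    {c : Fin k} {u : α} (hu : u ∈ B c) (hu' : u ∉ B' c) :
    ∃ W : TadpoleWalk M B, ShortcutFree W ∧ 0 < W.m ∧
      IsWalk (AlignedArc M B B') W.x W.m := by
  classical
  have hcyc := exists_closed_alignedWalk hB hB' hJ hu hu'
  set m := Nat.find hcyc
  have hm : 0 < m := (Nat.find_spec hcyc).choose_spec.1
  have hesc : ∃ ℓ x p, x m = x 0 ∧ IsWalk (AlignedArc M B B') x m ∧ p 0 = x 0 ∧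
      IsWalk (Function.curry (ArcD M B)) p ℓ ∧ FreeVertex M B (p ℓ) := by
    obtain ⟨x, hm, hxc, hx⟩ := Nat.find_spec hcyc
    obtain ⟨c, ⟨hx0, -⟩, -⟩ := hx 0 hm
    have hx0K : ¬ IsUnionColoop M (x 0) := fun hK0 =>
      notMem_of_closed_alignedWalk hB' hx hxc hm hx0 ((Set.ext_iff.1 (hK c) (x 0)).1 ⟨hK0, hx0⟩).2
    obtain ⟨ℓ, p, hp0, hp, hpF⟩ := hB.exists_isWalk_to_free hx0 hx0K
    exact ⟨ℓ, x, p, hxc, hx, hp0, hp, hpF⟩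
  obtain ⟨x, p, hxc, hx, hp0, hp, hpF⟩ := Nat.find_spec hesc
  have hmin_m : ∀ y L, 0 < L → y L = y 0 → IsWalk (AlignedArc M B B') y L → m ≤ L :=
    fun y L hL hyc hy => Nat.find_min' hcyc ⟨y, hL, hyc, hy⟩
  have hmin_ℓ : ∀ j ≤ m, ∀ y L, y 0 = x j → IsWalk (Function.curry (ArcD M B)) y L →
      FreeVertex M B (y L) → Nat.find hesc ≤ L := fun j hj y L hy0 hy hyF => by
    obtain ⟨z, hz, hzc, hz0⟩ := hx.rotate hxc hj
    exact Nat.find_min' hesc ⟨z, y, hzc, hz, hy0.trans hz0.symm, hy, hyF⟩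
  obtain ⟨W, hWm, hWn, hWx⟩ :=
    exists_tadpoleWalk_of_minimal hm hxc hx hmin_m hp0 hp hpF hmin_ℓ
  have hal : IsWalk (AlignedArc M B B') W.x W.m := fun t ht => by
    rw [hWx t (by omega), hWx (t + 1) (by omega)]
    exact hx t (hWm ▸ ht)
  refine ⟨W, W.shortcutFree_of_minimal hB hal (hWm ▸ hmin_m) fun j hj y L hy0 => ?_, hWm ▸ hm, hal⟩
  rw [hWn, hWm, Nat.add_sub_cancel_left]
  exact hmin_ℓ j (hWm ▸ hj) y L (hy0.trans (hWx j (hWm ▸ hj)))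

end Tadpole

/-- Ranks the positions of a tadpole-walk compatibly with `≺`: the root `0 = m` first, then
the others in order along the walk. -/
def tadpoleRank (m t : ℕ) : ℕ := if t = 0 ∨ t = m then 0 else t + 1

theorem tadpolePrec_of_tadpoleRank_lt {m p q : ℕ} (h : tadpoleRank m p < tadpoleRank m q) :
    TadpolePrec m p q := by
  unfold TadpolePrec
  unfold tadpoleRank at h
  split_ifs at h <;> omega

theorem tadpoleRank_injOn {m : ℕ} {S : Finset ℕ} (hS : ¬(0 ∈ S ∧ m ∈ S)) :
    Set.InjOn (tadpoleRank m) S := by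
  intro p hp q hq h
  unfold tadpoleRank at h
  have : ¬(p = 0 ∧ q = m) := fun h => hS ⟨h.1 ▸ hp, h.2 ▸ hq⟩
  have : ¬(q = 0 ∧ p = m) := fun h => hS ⟨h.1 ▸ hq, h.2 ▸ hp⟩
  split_ifs at h <;> omega

namespace TadpoleWalk

variable {M : Fin k → FinMatroid α} {B : Fin k → Finset α} (W : TadpoleWalk M B)

noncomputable def apply (S : Finset ℕ) : Fin k → Finset α :=
  applyArcs M B (S.image fun t => (W.x t, W.x (t + 1)))

/-- Positions whose arcs can be applied together: the root `x 0 = x m` is used by at most one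
of them, and every head other than the free end `x n` lands on a vertex vacated by another. -/
def IsApplicable (S : Finset ℕ) : Prop :=
  (∀ t ∈ S, t < W.n) ∧ ¬(0 ∈ S ∧ W.m ∈ S) ∧
    ∀ t ∈ S, t + 1 < W.n → ∃ q ∈ S, W.x q = W.x (t + 1)

variable {W} {S : Finset ℕ}

theorem exists_tail_mem {t : ℕ} (ht : t < W.n) : ∃ c, W.x t ∈ B c :=
  let ⟨c, h⟩ := W.arc t ht
  ⟨c, h.1⟩

theorem arcOf (hB : FeasibleSeq M B) {t : ℕ} (ht : t < W.n) {c : Fin k} (hc : W.x t ∈ B c) :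
    ArcOf M B c (W.x t, W.x (t + 1)) :=
  (arcD_iff_arcOf hB hc).1 (W.arc t ht)

theorem head_injective {t t' : ℕ} (ht : t < W.n) (ht' : t' < W.n)
    (h : W.x (t + 1) = W.x (t' + 1)) : t = t' := by
  rcases Nat.lt_trichotomy t t' with hlt | rfl | hlt
  · have := W.distinct _ _ (Nat.succ_lt_succ hlt) ht' h
    omega
  · rfl
  · have := W.distinct _ _ (Nat.succ_lt_succ hlt) ht h.symm
    omega

theorem tail_injective {t t' : ℕ} (ht : t < W.n) (ht' : t' < W.n) (h : W.x t = W.x t') :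
    t = t' ∨ (t = 0 ∧ t' = W.m) ∨ (t = W.m ∧ t' = 0) := by
  rcases Nat.lt_trichotomy t t' with hlt | rfl | hlt
  · exact .inr (.inl (W.distinct _ _ hlt ht'.le h))
  · exact .inl rfl
  · exact .inr (.inr (W.distinct _ _ hlt ht.le h.symm).symm)

theorem apply_eq (hB : FeasibleSeq M B) (hS : ∀ t ∈ S, t < W.n) (c : Fin k) :
    W.apply S c = B c \ (S.filter (W.x · ∈ B c)).image W.x ∪
      (S.filter (W.x · ∈ B c)).image fun t => W.x (t + 1) := by
  classical
  have hfilter : (S.image fun t => (W.x t, W.x (t + 1))).filter (ArcOf M B c) =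
      (S.filter (W.x · ∈ B c)).image fun t => (W.x t, W.x (t + 1)) := by
    rw [Finset.filter_image]
    congr 1
    exact Finset.filter_congr fun t ht => ⟨fun h => h.1, fun h => arcOf hB (hS t ht) h⟩
  simp only [apply, applyArcs, hfilter, Finset.image_image]
  rfl

theorem mem_apply (hB : FeasibleSeq M B) (hS : ∀ t ∈ S, t < W.n) {c : Fin k}
    {z : α} : z ∈ W.apply S c ↔
      (z ∈ B c ∧ ∀ t ∈ S, W.x t ≠ z) ∨ ∃ t ∈ S, W.x t ∈ B c ∧ W.x (t + 1) = z := by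
  rw [apply_eq hB hS]
  simp only [Finset.mem_union, Finset.mem_sdiff, Finset.mem_image, Finset.mem_filter, and_assoc]
  refine or_congr (and_congr_right fun hz => ?_) Iff.rfl
  exact ⟨fun h t ht hzt => h ⟨t, ht, hzt ▸ hz, hzt⟩, fun h ⟨t, ht, _, hzt⟩ => h t ht hzt⟩

theorem IsApplicable.injOn (hS : W.IsApplicable S) : Set.InjOn W.x S := by
  intro t ht t' ht' h
  rcases tail_injective (hS.1 t ht) (hS.1 t' ht') h with h | ⟨rfl, rfl⟩ | ⟨rfl, rfl⟩
  · exact h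
  · exact absurd ⟨ht, ht'⟩ hS.2.1
  · exact absurd ⟨ht', ht⟩ hS.2.1

/-- Within one matroid, ordering the arcs by `≺` makes the exchanges triangular, since `W` has
no shortcuts. -/
theorem apply_bases (hB : FeasibleSeq M B) (hW : ShortcutFree W)
    (hS : W.IsApplicable S) (c : Fin k) : (M c).Bases (W.apply S c) := by
  have hsub : S.filter (W.x · ∈ B c) ⊆ S := Finset.filter_subset _ _
  have hmem : ∀ t ∈ S.filter (W.x · ∈ B c), t < W.n ∧ W.x t ∈ B c := fun t ht =>
    ⟨hS.1 t (hsub ht), (Finset.mem_filter.1 ht).2⟩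
  have harc : ∀ t ∈ S.filter (W.x · ∈ B c), ArcOf M B c (W.x t, W.x (t + 1)) := fun t ht =>
    arcOf hB (hmem t ht).1 (hmem t ht).2
  rw [apply_eq hB hS.1]
  exact FinMatroid.bases_sdiff_image_union_image (hB.1 c) (fun t ht => (hmem t ht).2)
    (fun t ht => (harc t ht).2.2.1) (hS.injOn.mono hsub)
    (fun t ht t' ht' h => head_injective (hmem t ht).1 (hmem t' ht').1 h)
    ((tadpoleRank_injOn hS.2.1).mono hsub) (fun t ht => (harc t ht).2.2.2)
    fun t ht t' ht' hlt hbase => hW c t (hmem t ht).1 t' (hmem t' ht').1 (harc t ht)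
      (harc t' ht') (tadpolePrec_of_tadpoleRank_lt hlt)
      ⟨(hmem t ht).2, (harc t' ht').2.1, (harc t' ht').2.2.1, hbase⟩

theorem IsApplicable.exists_tail_eq_head (hS : W.IsApplicable S) {t : ℕ} (ht : t ∈ S)
    {c : Fin k} (hc : W.x (t + 1) ∈ B c) : ∃ q ∈ S, W.x q = W.x (t + 1) := by
  rcases (Nat.succ_le_of_lt (hS.1 t ht)).lt_or_eq with hlt | heq
  · exact hS.2.2 t ht hlt
  · exact (W.last_free.2 c (heq ▸ hc)).elim

theorem apply_feasible (hB : FeasibleSeq M B) (hW : ShortcutFree W) (hS : W.IsApplicable S) :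
    FeasibleSeq M (W.apply S) := by
  refine ⟨apply_bases hB hW hS, fun c c' hcc' => Finset.disjoint_left.2 fun z hz hz' => ?_⟩
  rw [mem_apply hB hS.1] at hz hz'
  rcases hz with ⟨hzB, hz⟩ | ⟨t, ht, htB, htz⟩ <;>
    rcases hz' with ⟨hzB', hz'⟩ | ⟨t', ht', htB', htz'⟩
  · exact Finset.disjoint_left.1 (hB.2 c c' hcc') hzB hzB'
  · obtain ⟨q, hq, hqz⟩ := hS.exists_tail_eq_head ht' (htz' ▸ hzB)
    exact hz q hq (hqz.trans htz')
  · obtain ⟨q, hq, hqz⟩ := hS.exists_tail_eq_head ht (htz ▸ hzB')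
    exact hz' q hq (hqz.trans htz)
  · obtain rfl := head_injective (hS.1 t ht) (hS.1 t' ht') (htz.trans htz'.symm)
    exact Finset.disjoint_left.1 (hB.2 c c' hcc') htB htB'

theorem apply_insert (hB : FeasibleSeq M B) (hS : ∀ t ∈ S, t < W.n) {t₀ : ℕ}
    (ht₀ : t₀ < W.n) {c₀ : Fin k} (hc₀ : W.x t₀ ∈ B c₀) :
    W.apply (insert t₀ S) =
      Function.update (W.apply S) c₀ (insert (W.x (t₀ + 1)) ((W.apply S c₀).erase (W.x t₀))) := by
  have hS' : ∀ t ∈ insert t₀ S, t < W.n := Finset.forall_mem_insert _ _ _ |>.2 ⟨ht₀, hS⟩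
  funext c
  ext z
  by_cases hc : c = c₀
  · subst hc
    have hhead : ∀ t ∈ S, W.x t ∈ B c → W.x (t + 1) ≠ W.x t₀ := fun t ht htB h =>
      (arcOf hB (hS t ht) htB).2.2.1 (h ▸ hc₀)
    rw [Function.update_self, mem_apply hB hS', Finset.mem_insert, Finset.mem_erase,
      mem_apply hB hS]
    simp only [Finset.forall_mem_insert, Finset.exists_mem_insert]
    constructor
    · rintro (⟨hzB, hz₀, hz⟩ | ⟨-, rfl⟩ | ⟨t, ht, htB, rfl⟩)
      · exact .inr ⟨Ne.symm hz₀, .inl ⟨hzB, hz⟩⟩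
      · exact .inl rfl
      · exact .inr ⟨hhead t ht htB, .inr ⟨t, ht, htB, rfl⟩⟩
    · rintro (rfl | ⟨hz₀, ⟨hzB, hz⟩ | h⟩)
      · exact .inr (.inl ⟨hc₀, rfl⟩)
      · exact .inl ⟨hzB, Ne.symm hz₀, hz⟩
      · exact .inr (.inr h)
  · have hne : ∀ z ∈ B c, W.x t₀ ≠ z := fun z hz h =>
      Finset.disjoint_left.1 (hB.2 c₀ c (Ne.symm hc)) hc₀ (h ▸ hz)
    have hnot : W.x t₀ ∉ B c := fun h => hne _ h rfl
    rw [Function.update_of_ne hc, mem_apply hB hS', mem_apply hB hS]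
    simp only [Finset.forall_mem_insert, Finset.exists_mem_insert]
    constructor
    · rintro (⟨hzB, -, hz⟩ | ⟨h, -⟩ | h)
      · exact .inl ⟨hzB, hz⟩
      · exact absurd h hnot
      · exact .inr h
    · rintro (⟨hzB, hz⟩ | h)
      · exact .inl ⟨hzB, hne z hzB, hz⟩
      · exact .inr (.inr h)

theorem apply_swap (hB : FeasibleSeq M B) (hS : ∀ t ∈ S, t < W.n)
    (hmS : W.m ∈ S) {c₀ : Fin k} (hc₀ : W.x 0 ∈ B c₀) :
    W.apply (insert 0 (S.erase W.m)) =
      Function.update (W.apply S) c₀ (insert (W.x 1) ((W.apply S c₀).erase (W.x (W.m + 1)))) := by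
  have hmn := hS _ hmS
  have hS' : ∀ t ∈ insert 0 (S.erase W.m), t < W.n := Finset.forall_mem_insert _ _ _ |>.2
    ⟨by omega, fun t ht => hS t (Finset.mem_of_mem_erase ht)⟩
  have hxm : W.x W.m = W.x 0 := W.closed
  have hkept : ∀ z, (∀ t ∈ S, W.x t ≠ z) ↔ W.x 0 ≠ z ∧ ∀ t ∈ S.erase W.m, W.x t ≠ z :=
    fun z => ⟨fun h => ⟨hxm ▸ h _ hmS, fun t ht => h t (Finset.mem_of_mem_erase ht)⟩,
      fun h t ht => if htm : t = W.m then htm ▸ hxm ▸ h.1 else h.2 t (Finset.mem_erase.2 ⟨htm, ht⟩)⟩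
  funext c
  ext z
  by_cases hc : c = c₀
  · subst hc
    rw [Function.update_self, mem_apply hB hS', Finset.mem_insert, Finset.mem_erase,
      mem_apply hB hS, hkept]
    simp only [Finset.forall_mem_insert, Finset.exists_mem_insert, Finset.mem_erase]
    constructor
    · rintro (⟨hzB, hz⟩ | ⟨-, rfl⟩ | ⟨t, ⟨htm, ht⟩, htB, rfl⟩)
      · refine .inr ⟨fun h => (arcOf hB hmn (hxm ▸ hc₀)).2.2.1 (h ▸ hzB), .inl ⟨hzB, hz⟩⟩
      · exact .inl rfl
      · exact .inr ⟨fun h => htm (head_injective (hS t ht) hmn h), .inr ⟨t, ht, htB, rfl⟩⟩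
    · rintro (rfl | ⟨hz, ⟨hzB, hz'⟩ | ⟨t, ht, htB, rfl⟩⟩)
      · exact .inr (.inl ⟨hc₀, rfl⟩)
      · exact .inl ⟨hzB, hz'⟩
      · exact .inr (.inr ⟨t, ⟨fun h => hz (h ▸ rfl), ht⟩, htB, rfl⟩)
  · have hx0 : W.x 0 ∉ B c := fun h => Finset.disjoint_left.1 (hB.2 c₀ c (Ne.symm hc)) hc₀ h
    rw [Function.update_of_ne hc, mem_apply hB hS', mem_apply hB hS, hkept]
    simp only [Finset.forall_mem_insert, Finset.exists_mem_insert, Finset.mem_erase]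
    constructor
    · rintro (h | ⟨h, -⟩ | ⟨t, ⟨-, ht⟩, h⟩)
      · exact .inl h
      · exact absurd h hx0
      · exact .inr ⟨t, ht, h⟩
    · rintro (h | ⟨t, ht, htB, rfl⟩)
      · exact .inl h
      · exact .inr (.inr ⟨t, ⟨fun h => hx0 (hxm ▸ h ▸ htB), ht⟩, htB, rfl⟩)

theorem isApplicable_Ico {j : ℕ} (hj : 0 < j) : W.IsApplicable (Finset.Ico j W.n) := by
  refine ⟨fun t ht => (Finset.mem_Ico.1 ht).2, fun h => ?_, fun t ht hlt => ⟨t + 1, ?_, rfl⟩⟩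
  · have := Finset.mem_Ico.1 h.1
    omega
  · have := Finset.mem_Ico.1 ht
    exact Finset.mem_Ico.2 ⟨by omega, hlt⟩

theorem isApplicable_range_union_Ico (hm : 0 < W.m) {j : ℕ} (hj : W.m < j) :
    W.IsApplicable (Finset.range W.m ∪ Finset.Ico j W.n) := by
  have hmn := W.m_lt_n
  simp only [IsApplicable, Finset.mem_union, Finset.mem_range, Finset.mem_Ico]
  refine ⟨fun t ht => by omega, by omega, fun t ht hlt => ?_⟩
  rcases ht with ht | ht
  · rcases Nat.lt_or_ge (t + 1) W.m with h | h
    · exact ⟨t + 1, .inl h, rfl⟩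
    · exact ⟨0, .inl hm, by rw [show t + 1 = W.m by omega, W.closed]⟩
  · exact ⟨t + 1, .inr ⟨by omega, hlt⟩, rfl⟩

theorem reconfigAdj_apply_insert (hB : FeasibleSeq M B) (hW : ShortcutFree W)
    (hS : W.IsApplicable S) {t₀ : ℕ} (ht₀S : t₀ ∉ S) (ht₀ : t₀ ≠ 0)
    (hS' : W.IsApplicable (insert t₀ S)) :
    ReconfigAdj M (W.apply S) (W.apply (insert t₀ S)) := by
  have ht₀n := hS'.1 t₀ (Finset.mem_insert_self _ _)
  obtain ⟨c₀, hc₀⟩ := exists_tail_mem ht₀n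
  have harc := arcOf hB ht₀n hc₀
  refine ⟨apply_feasible hB hW hS, apply_feasible hB hW hS', ?_⟩
  rw [apply_insert hB hS.1 ht₀n hc₀]
  refine adjacentSeq_update ((mem_apply hB hS.1).2 (.inl ⟨hc₀, fun q hq h => ?_⟩)) harc.2.1 ?_
  · rcases tail_injective (hS.1 q hq) ht₀n h with rfl | ⟨rfl, rfl⟩ | ⟨-, rfl⟩
    · exact ht₀S hq
    · exact hS'.2.1 ⟨Finset.mem_insert_of_mem hq, Finset.mem_insert_self _ _⟩
    · exact ht₀ rfl
  · rw [mem_apply hB hS.1]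
    rintro (⟨h, -⟩ | ⟨q, hq, -, h⟩)
    · exact harc.2.2.1 h
    · exact ht₀S (head_injective (hS.1 q hq) ht₀n h ▸ hq)

/-- Each new head lands on the vertex just vacated by the previous arc, or on the free end. -/
theorem reflTransGen_apply_union_Ico (hB : FeasibleSeq M B) (hW : ShortcutFree W)
    {S₀ : Finset ℕ} {j₀ : ℕ} (hj₀ : 0 < j₀) (hS₀ : ∀ q ∈ S₀, q < j₀)
    (happ : ∀ j, j₀ ≤ j → W.IsApplicable (S₀ ∪ Finset.Ico j W.n)) :
    Relation.ReflTransGen (ReconfigAdj M) (W.apply S₀) (W.apply (S₀ ∪ Finset.Ico j₀ W.n)) := by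
  induction h : W.n - j₀ generalizing j₀ with
  | zero =>
    rw [Finset.Ico_eq_empty_of_le (Nat.sub_eq_zero_iff_le.1 h), Finset.union_empty]
  | succ d ih =>
    have hins : S₀ ∪ Finset.Ico j₀ W.n = insert j₀ (S₀ ∪ Finset.Ico (j₀ + 1) W.n) := by
      ext q
      by_cases hq : q ∈ S₀
      · simp [hq, (hS₀ q hq).ne]
      · simp only [Finset.mem_union, Finset.mem_Ico, Finset.mem_insert, hq, false_or]
        omega
    rw [hins]
    refine (ih (by omega) (fun q hq => (hS₀ q hq).trans (by omega))
      (fun j hj => happ j (by omega)) (by omega)).tail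
      (reconfigAdj_apply_insert hB hW (happ _ (by omega)) ?_ hj₀.ne' (hins ▸ happ j₀ le_rfl))
    simp only [Finset.mem_union, Finset.mem_Ico, not_or]
    exact ⟨fun h => (hS₀ j₀ h).false, by omega⟩

theorem apply_empty : W.apply ∅ = B := by
  funext c
  simp [apply, applyArcs]

theorem reconfigAdj_apply_swap (hB : FeasibleSeq M B) (hW : ShortcutFree W) (hm : 0 < W.m) :
    ReconfigAdj M (W.apply (Finset.Ico 1 W.n))
      (W.apply (Finset.range W.m ∪ Finset.Ico (W.m + 1) W.n)) := by
  have hmn := W.m_lt_n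
  have hS := isApplicable_Ico (W := W) one_pos
  have hswap : insert 0 ((Finset.Ico 1 W.n).erase W.m) =
      Finset.range W.m ∪ Finset.Ico (W.m + 1) W.n := by
    ext t
    simp only [Finset.mem_insert, Finset.mem_erase, Finset.mem_Ico, Finset.mem_union,
      Finset.mem_range]
    omega
  obtain ⟨c₀, hc₀⟩ := exists_tail_mem (W := W) (t := 0) (by omega)
  have harc := arcOf hB (W := W) (t := 0) (by omega) hc₀
  have hmS : W.m ∈ Finset.Ico 1 W.n := Finset.mem_Ico.2 ⟨hm, hmn⟩
  refine ⟨apply_feasible hB hW hS,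
    apply_feasible hB hW (isApplicable_range_union_Ico hm (by omega)), ?_⟩
  rw [← hswap, apply_swap hB hS.1 hmS hc₀]
  refine adjacentSeq_update ((mem_apply hB hS.1).2 (.inr ⟨W.m, hmS, W.closed ▸ hc₀, rfl⟩))
    harc.2.1 ?_
  rw [mem_apply hB hS.1]
  rintro (⟨h, -⟩ | ⟨t, ht, -, h⟩)
  · exact harc.2.2.1 h
  · have := head_injective (hS.1 t ht) (by omega) h
    have := (Finset.mem_Ico.1 ht).1
    omega

theorem reflTransGen_apply_range (hB : FeasibleSeq M B) (hW : ShortcutFree W) (hm : 0 < W.m) :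
    Relation.ReflTransGen (ReconfigAdj M) B (W.apply (Finset.range W.m)) := by
  have h₁ := reflTransGen_apply_union_Ico hB hW (S₀ := ∅) one_pos (by simp)
    fun j hj => by simpa using isApplicable_Ico (W := W) (by omega : 0 < j)
  have h₃ := reflTransGen_apply_union_Ico hB hW (S₀ := Finset.range W.m) (j₀ := W.m + 1)
    (by omega) (fun q hq => by simp at hq; omega)
    fun j hj => isApplicable_range_union_Ico hm (by omega)
  rw [Finset.empty_union, apply_empty] at h₁
  exact (h₁.tail (reconfigAdj_apply_swap hB hW hm)).trans h₃.reconfigAdj_symm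

/-- Applying an aligned cycle only removes misplaced tails and brings every head into its
target basis. -/
theorem sum_card_sdiff_apply_range_lt {B' : Fin k → Finset α} (hB : FeasibleSeq M B)
    (hB' : FeasibleSeq M B') (hm : 0 < W.m) (hal : IsWalk (AlignedArc M B B') W.x W.m) :
    ∑ c, (B' c \ W.apply (Finset.range W.m) c).card < ∑ c, (B' c \ B c).card := by
  have hS : ∀ t ∈ Finset.range W.m, t < W.n := fun t ht =>
    (Finset.mem_range.1 ht).trans W.m_lt_n
  have hsub : ∀ c, B' c \ W.apply (Finset.range W.m) c ⊆ B' c \ B c := by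
    intro c z hz
    rw [Finset.mem_sdiff] at hz ⊢
    refine ⟨hz.1, fun hzB => hz.2 ((mem_apply hB hS).2 (.inl ⟨hzB, fun t ht h => ?_⟩))⟩
    exact notMem_of_closed_alignedWalk hB' hal W.closed (Finset.mem_range.1 ht) (h ▸ hzB)
      (h ▸ hz.1)
  obtain ⟨c₀, harc, hx₁⟩ := hal 0 hm
  refine Finset.sum_lt_sum (fun c _ => Finset.card_le_card (hsub c))
    ⟨c₀, Finset.mem_univ _, Finset.card_lt_card ((Finset.ssubset_iff_of_subset (hsub c₀)).2
      ⟨W.x 1, Finset.mem_sdiff.2 ⟨hx₁, harc.2.2.1⟩, fun h => (Finset.mem_sdiff.1 h).2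
        ((mem_apply hB hS).2 (.inr ⟨0, Finset.mem_range.2 hm, harc.1, rfl⟩))⟩)⟩

end TadpoleWalk

section Main

variable {M : Fin k → FinMatroid α} {B B' : Fin k → Finset α}

theorem FeasibleSeq.exists_mem_sdiff_of_ne (hB : FeasibleSeq M B) (hB' : FeasibleSeq M B')
    (hne : B ≠ B') : ∃ i, ∃ y ∈ B' i, y ∉ B i := by
  by_contra h
  simp only [not_exists, not_and, not_not] at h
  exact hne (funext fun i => (Finset.eq_of_subset_of_card_le (fun y => h i y)
    (FinMatroid.card_eq_of_bases (hB.1 i) (hB'.1 i)).le).symm)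

theorem FeasibleSeq.update_insert_erase (hB : FeasibleSeq M B) {i : Fin k} {x y : α}
    (hbase : (M i).Bases (insert y ((B i).erase x))) (hy : ∀ c, y ∉ B c) :
    FeasibleSeq M (Function.update B i (insert y ((B i).erase x))) := by
  have hmem : ∀ c z, z ∈ Function.update B i (insert y ((B i).erase x)) c →
      (z = y ∧ c = i) ∨ z ∈ B c := by
    intro c z hz
    by_cases hc : c = i
    · subst hc
      simp only [Function.update_self, Finset.mem_insert, Finset.mem_erase] at hz
      exact hz.imp (⟨·, rfl⟩) And.right
    · simp only [Function.update_of_ne hc] at hz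
      exact .inr hz
  refine ⟨fun c => ?_, fun c c' hcc' => Finset.disjoint_left.2 fun z hz hz' => ?_⟩
  · by_cases hc : c = i
    · subst hc; simpa using hbase
    · simpa [hc] using hB.1 c
  rcases hmem c z hz with ⟨hzy, hc⟩ | hzc <;> rcases hmem c' z hz' with ⟨hzy', hc'⟩ | hzc'
  · exact hcc' (hc.trans hc'.symm)
  · exact hy c' (hzy ▸ hzc')
  · exact hy c (hzy' ▸ hzc)
  · exact Finset.disjoint_left.1 (hB.2 c c' hcc') hzc hzc'

theorem exists_reconfigAdj_sum_lt_of_notMem (hB : FeasibleSeq M B) (hB' : FeasibleSeq M B')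
    {i : Fin k} {y : α} (hy : y ∈ B' i) (hyB : y ∉ Finset.univ.biUnion B) :
    ∃ B₂, ReconfigAdj M B B₂ ∧ ∑ c, (B' c \ B₂ c).card < ∑ c, (B' c \ B c).card := by
  have hyc : ∀ c, y ∉ B c := fun c h => hyB (Finset.mem_biUnion.2 ⟨c, Finset.mem_univ c, h⟩)
  obtain ⟨x, hx, hxB', hbase⟩ := FinMatroid.rev_exchange (hB.1 i) (hB'.1 i) hy (hyc i)
  set B₂ := Function.update B i (insert y ((B i).erase x))
  have hsub : ∀ c, B' c \ B₂ c ⊆ B' c \ B c := by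
    intro c z hz
    rw [Finset.mem_sdiff] at hz ⊢
    refine ⟨hz.1, fun hzB => hz.2 ?_⟩
    by_cases hc : c = i
    · subst hc
      simp only [B₂, Function.update_self]
      exact Finset.mem_insert_of_mem (Finset.mem_erase.2 ⟨fun h => hxB' (h ▸ hz.1), hzB⟩)
    · simpa [B₂, hc] using hzB
  refine ⟨B₂, ⟨hB, hB.update_insert_erase hbase hyc,
    adjacentSeq_update hx ((M i).bases_subset_ground _ (hB'.1 i) hy) (hyc i)⟩,
    Finset.sum_lt_sum (fun c _ => Finset.card_le_card (hsub c)) ⟨i, Finset.mem_univ _,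
      Finset.card_lt_card ((Finset.ssubset_iff_of_subset (hsub i)).2
        ⟨y, Finset.mem_sdiff.2 ⟨hy, hyc i⟩, fun h => (Finset.mem_sdiff.1 h).2 (by simp [B₂])⟩)⟩⟩

theorem exists_reflTransGen_sum_lt (hB : FeasibleSeq M B) (hB' : FeasibleSeq M B')
    (hK : ∀ i, {x | IsUnionColoop M x} ∩ (B i : Set α) = {x | IsUnionColoop M x} ∩ (B' i : Set α))
    (hne : B ≠ B') :
    ∃ B₂, FeasibleSeq M B₂ ∧ Relation.ReflTransGen (ReconfigAdj M) B B₂ ∧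
      ∑ c, (B' c \ B₂ c).card < ∑ c, (B' c \ B c).card := by
  by_cases hJ : Finset.univ.biUnion B = Finset.univ.biUnion B'
  · obtain ⟨i, y, hy, hyB⟩ := hB.exists_mem_sdiff_of_ne hB' hne
    obtain ⟨c, -, hyc⟩ := Finset.mem_biUnion.1
      (hJ ▸ Finset.mem_biUnion.2 ⟨i, Finset.mem_univ i, hy⟩ : y ∈ Finset.univ.biUnion B)
    have hci : c ≠ i := fun h => hyB (h ▸ hyc)
    obtain ⟨W, hW, hm, hal⟩ := exists_shortcutFree_tadpoleWalk hB hB' hJ hK hyc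
      (Finset.disjoint_right.1 (hB'.2 c i hci) hy)
    exact ⟨_, W.apply_feasible hB hW (by simpa using W.isApplicable_range_union_Ico hm W.m_lt_n),
      W.reflTransGen_apply_range hB hW hm, W.sum_card_sdiff_apply_range_lt hB hB' hm hal⟩
  · obtain ⟨y, hy, hyB⟩ := Finset.not_subset.1
      fun h : Finset.univ.biUnion B' ⊆ Finset.univ.biUnion B =>
        hJ (Finset.eq_of_subset_of_card_le h (hB.isUnionBasis.1.card_le hB')).symm
    obtain ⟨i, -, hyi⟩ := Finset.mem_biUnion.1 hy
    obtain ⟨B₂, hadj, hlt⟩ := exists_reconfigAdj_sum_lt_of_notMem hB hB' hyi hyB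
    exact ⟨B₂, hadj.2.1, .single hadj, hlt⟩

theorem reflTransGen_of_coloop_inter_eq (hB' : FeasibleSeq M B') (hB : FeasibleSeq M B)
    (hK : ∀ i, {x | IsUnionColoop M x} ∩ (B i : Set α) = {x | IsUnionColoop M x} ∩ (B' i : Set α)) :
    Relation.ReflTransGen (ReconfigAdj M) B B' := by
  induction hn : ∑ c, (B' c \ B c).card using Nat.strong_induction_on generalizing B with
  | _ n ih =>
  by_cases hne : B = B'
  · exact hne ▸ .refl
  obtain ⟨B₂, hB₂, h, hlt⟩ := exists_reflTransGen_sum_lt hB hB' hK hne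
  refine h.trans (ih _ (hn ▸ hlt) hB₂ (fun i => ?_) rfl)
  rw [← (reconfigurable_of_reflTransGen h hB).coloop_inter_eq i, hK i]

end Main

/-- **Theorem (statement 0).** Let `K` be the set of coloops of `⋁ i, M i`.
Feasible basis sequences `B` and `B'` of `𝕄` satisfy: `B` is reconfigurable to
`B'` iff `K ∩ B i = K ∩ B' i` for every `i`. -/
theorem basis_seq_reconfigurable_iff_coloops {α : Type u} [DecidableEq α] {k : ℕ}
    (M : Fin k → FinMatroid α) (B B' : Fin k → Finset α)
    (hB : FeasibleSeq M B) (hB' : FeasibleSeq M B') :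
    Reconfigurable M B B' ↔
      ∀ i, {x | IsUnionColoop M x} ∩ (B i : Set α) =
        {x | IsUnionColoop M x} ∩ (B' i : Set α) :=
  ⟨fun h => h.coloop_inter_eq, fun hK =>
    reconfigurable_of_reflTransGen (reflTransGen_of_coloop_inter_eq hB' hB hK) hB⟩
end

section
/- Let 𝕄 = (M_1, …, M_k) be a tuple of matroids with M_i = (E_i, 𝓑_i), and let K be the set of coloops of the matroid union ⋁_{i=1}^k M_i. If a feasible basis sequence 𝔹 = (B_1, …, B_k) of 𝕄 is reconfigurable to a feasible basis sequence 𝔹' = (B'_1, …, B'_k), then K ∩ B_i = K ∩ B'_i for every i ∈ {1, …, k}. -/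
universe u

variable {α : Type u} [DecidableEq α] {k : ℕ}

/-- All bases of a `FinMatroid` have the same cardinality. -/
theorem FinMatroid.card_bases_eq (M : FinMatroid α) :
    ∀ B B', M.Bases B → M.Bases B' → B.card = B'.card := by
  suffices h : ∀ n B B', (B \ B').card = n → M.Bases B → M.Bases B' →
      B.card = B'.card by
    intro B B' hB hB'; exact h _ B B' rfl hB hB'
  intro n
  induction n with
  | zero =>
    intro B B' hcard hB hB'
    have hempty : B \ B' = ∅ := Finset.card_eq_zero.1 hcard
    have hsub : B ⊆ B' := by
      intro a ha
      by_contra h'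
      have : a ∈ B \ B' := Finset.mem_sdiff.2 ⟨ha, h'⟩
      simp [hempty] at this
    have hsub' : B' ⊆ B := by
      intro a ha
      by_contra h'
      obtain ⟨y, hyB, hyB', _⟩ := M.basis_exchange B' B hB' hB a ha h'
      exact hyB' (hsub hyB)
    exact le_antisymm (Finset.card_le_card hsub) (Finset.card_le_card hsub')
  | succ n ih =>
    intro B B' hcard hB hB'
    have hne : (B \ B').Nonempty := by
      rw [← Finset.card_pos, hcard]; omega
    obtain ⟨x, hx⟩ := hne
    obtain ⟨hxB, hxB'⟩ := Finset.mem_sdiff.1 hx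
    obtain ⟨y, hyB', hyB, hbasis⟩ := M.basis_exchange B B' hB hB' x hxB hxB'
    have hyE : y ∉ B.erase x := fun hy => hyB (Finset.mem_of_mem_erase hy)
    have hc : (insert y (B.erase x)).card = B.card := by
      rw [Finset.card_insert_of_notMem hyE, Finset.card_erase_of_mem hxB]
      have : 1 ≤ B.card := Finset.card_pos.2 ⟨x, hxB⟩
      omega
    have hd : ((insert y (B.erase x)) \ B').card = n := by
      have heq : (insert y (B.erase x)) \ B' = (B \ B').erase x := by
        ext a
        simp only [Finset.mem_sdiff, Finset.mem_insert, Finset.mem_erase]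
        constructor
        · rintro ⟨ha | ⟨hax, haB⟩, haB'⟩
          · exact absurd (ha ▸ hyB') haB'
          · exact ⟨hax, haB, haB'⟩
        · rintro ⟨hax, haB, haB'⟩
          exact ⟨Or.inr ⟨hax, haB⟩, haB'⟩
      rw [heq, Finset.card_erase_of_mem hx, hcard]
      omega
    rw [← hc]
    exact ih _ B' hd hbasis hB'

/-- The union of the bases of a feasible sequence is a basis of the matroid
union. -/
theorem union_basis_of_feasible (M : Fin k → FinMatroid α) (B : Fin k → Finset α)
    (hB : FeasibleSeq M B) : IsUnionBasis M (Finset.univ.biUnion B) := by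
  refine ⟨⟨B, hB.1, rfl⟩, ?_⟩
  rintro V ⟨b, hb, rfl⟩ hUV
  refine Finset.eq_of_subset_of_card_le hUV ?_
  calc (Finset.univ.biUnion b).card
      ≤ ∑ i, (b i).card := Finset.card_biUnion_le
    _ = ∑ i, (B i).card := by
        refine Finset.sum_congr rfl fun i _ => ?_
        exact (M i).card_bases_eq _ _ (hb i) (hB.1 i)
    _ = (Finset.univ.biUnion B).card :=
        (Finset.card_biUnion fun i _ j _ hij => hB.2 i j hij).symm

/-- One adjacency step preserves the intersection with the coloop set. -/
theorem coloops_invariant_step (M : Fin k → FinMatroid α)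
    (B B' : Fin k → Finset α) (hB : FeasibleSeq M B) (hB' : FeasibleSeq M B')
    (hadj : AdjacentSeq M B B') :
    ∀ i, {x | IsUnionColoop M x} ∩ (B i : Set α) =
      {x | IsUnionColoop M x} ∩ (B' i : Set α) := by
  obtain ⟨i0, hsame, x, hx, y, hyE, hyB, hB'i⟩ := hadj
  intro i
  by_cases hi : i = i0
  · subst hi
    ext a
    simp only [Set.mem_inter_iff, Set.mem_setOf_eq, Finset.mem_coe]
    constructor
    · rintro ⟨hK, haB⟩
      refine ⟨hK, ?_⟩
      have hmem := hK _ (union_basis_of_feasible M B' hB')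
      rw [Finset.mem_biUnion] at hmem
      obtain ⟨j, _, haj⟩ := hmem
      by_cases hj : j = i
      · exact hj ▸ haj
      · exfalso
        rw [← hsame j hj] at haj
        exact (Finset.disjoint_left.1 (hB.2 j i hj)) haj haB
    · rintro ⟨hK, haB'⟩
      refine ⟨hK, ?_⟩
      have hmem := hK _ (union_basis_of_feasible M B hB)
      rw [Finset.mem_biUnion] at hmem
      obtain ⟨j, _, haj⟩ := hmem
      by_cases hj : j = i
      · exact hj ▸ haj
      · exfalso
        rw [hsame j hj] at haj
        exact (Finset.disjoint_left.1 (hB'.2 j i hj)) haj haB'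
  · rw [hsame i hi]

/-- **Theorem (statement 1).** If a feasible basis sequence `B` is
reconfigurable to a feasible basis sequence `B'`, then `K ∩ B i = K ∩ B' i` for
every `i`, where `K` is the set of coloops of `⋁ i, M i`. -/
theorem coloops_invariant_of_reconfigurable {α : Type u} [DecidableEq α] {k : ℕ}
    (M : Fin k → FinMatroid α) (B B' : Fin k → Finset α)
    (hB : FeasibleSeq M B) (hB' : FeasibleSeq M B')
    (h : Reconfigurable M B B') :
    ∀ i, {x | IsUnionColoop M x} ∩ (B i : Set α) =
      {x | IsUnionColoop M x} ∩ (B' i : Set α) := by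
  obtain ⟨ℓ, seq, h0, hℓ, hfeas, hadj⟩ := h
  have H : ∀ t ≤ ℓ, ∀ i, {x | IsUnionColoop M x} ∩ (seq 0 i : Set α) =
      {x | IsUnionColoop M x} ∩ (seq t i : Set α) := by
    intro t
    induction t with
    | zero => intro _ i; rfl
    | succ t ih =>
      intro ht i
      rw [ih (by omega) i]
      exact coloops_invariant_step M (seq t) (seq (t + 1))
        (hfeas t (by omega)) (hfeas (t + 1) ht) (hadj t (by omega)) i
  intro i
  have := H ℓ le_rfl i
  rwa [h0, hℓ] at this
end

section
/- Let 𝕄 = (M_1, …, M_k) be a tuple of matroids with M_i = (E_i, 𝓑_i), let 𝔹 = (B_1, …, B_k) be a feasible basis sequence of 𝕄, let E = ⋃_{i=1}^k E_i, and let B = ⋃_{i=1}^k B_i. Define the exchange relation R on E by: u R v if and only if there is an index i with u ∈ B_i, v ∈ E_i \ B_i, and (B_i \ {u}) ∪ {v} ∈ 𝓑_i. For y ∈ E \ B, let T_y be the set of all x ∈ E from which y is reachable by a (possibly empty) sequence of R-steps. Then the set of coloops of the matroid union ⋁_{i=1}^k M_i equals B \ ⋃_{y ∈ E \ B} T_y.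 -/
universe u

variable {α : Type u} [DecidableEq α] {k : ℕ}

namespace FinMatroid

set_option linter.unusedSectionVars false in
lemma card_insert_erase {B : Finset α} {x y : α} (hx : x ∈ B) (hy : y ∉ B) :
    (insert y (B.erase x)).card = B.card := by
  rw [Finset.card_insert_of_notMem (fun h => hy (Finset.mem_of_mem_erase h)),
    Finset.card_erase_of_mem hx]
  have : 1 ≤ B.card := Finset.card_pos.mpr ⟨x, hx⟩
  omega


section AuxLemmas
set_option linter.unusedSectionVars false
set_option maxHeartbeats 1000000

def Indep (M : FinMatroid α) (I : Finset α) : Prop := ∃ B, M.Bases B ∧ I ⊆ B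

def MaxIndepIn (M : FinMatroid α) (X J : Finset α) : Prop :=
  M.Indep J ∧ J ⊆ X ∧ ∀ x ∈ X, x ∉ J → ¬ M.Indep (insert x J)

def IsCircuit (M : FinMatroid α) (C : Finset α) : Prop :=
  ¬ M.Indep C ∧ ∀ x ∈ C, M.Indep (C.erase x)

open Classical in
noncomputable def fundC (M : FinMatroid α) (B : Finset α) (y : α) : Finset α :=
  if h : ∃ C, M.IsCircuit C ∧ C ⊆ insert y B then h.choose else ∅


variable {M : FinMatroid α}

lemma base_eq_of_subset {B B' : Finset α} (hB : M.Bases B) (hB' : M.Bases B')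
    (h : B ⊆ B') : B = B' := by
  by_contra hne
  obtain ⟨x, hxB', hxB⟩ : ∃ x ∈ B', x ∉ B := by
    by_contra hc
    push_neg at hc
    exact hne (Finset.Subset.antisymm h hc)
  obtain ⟨y, hyB, hyB', -⟩ := M.basis_exchange B' B hB' hB x hxB' hxB
  exact hyB' (h hyB)


lemma card_base_eq {B B' : Finset α} (hB : M.Bases B) (hB' : M.Bases B') :
    B.card = B'.card := by
  generalize hn : (B \ B').card = n
  induction n using Nat.strong_induction_on generalizing B with
  | _ n ih =>
    rcases Finset.eq_empty_or_nonempty (B \ B') with he | ⟨x, hx⟩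
    · have : B ⊆ B' := by
        intro a ha
        by_contra hc
        exact absurd (Finset.mem_sdiff.mpr ⟨ha, hc⟩) (by simp [he])
      rw [M.base_eq_of_subset hB hB' this]
    · rw [Finset.mem_sdiff] at hx
      obtain ⟨y, hyB', hyB, hB2⟩ := M.basis_exchange B B' hB hB' x hx.1 hx.2
      have hcard : (insert y (B.erase x)).card = B.card := card_insert_erase hx.1 hyB
      have hsd : (insert y (B.erase x)) \ B' = (B \ B').erase x := by
        ext a
        simp only [Finset.mem_sdiff, Finset.mem_insert, Finset.mem_erase]
        constructor
        · rintro ⟨rfl | ⟨hax, haB⟩, haB'⟩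
          · exact absurd hyB' haB'
          · exact ⟨hax, haB, haB'⟩
        · rintro ⟨hax, haB, haB'⟩
          exact ⟨Or.inr ⟨hax, haB⟩, haB'⟩
      have hlt : ((insert y (B.erase x)) \ B').card < n := by
        rw [hsd, ← hn]
        exact Finset.card_erase_lt_of_mem (Finset.mem_sdiff.mpr hx)
      rw [← hcard]
      exact ih _ hlt hB2 rfl


lemma indep_mono {I J : Finset α} (hJ : M.Indep J) (h : I ⊆ J) : M.Indep I := by
  obtain ⟨B, hB, hJB⟩ := hJ
  exact ⟨B, hB, h.trans hJB⟩

lemma base_indep {B : Finset α} (hB : M.Bases B) : M.Indep B := ⟨B, hB, le_refl _⟩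

lemma indep_subset_ground {I : Finset α} (hI : M.Indep I) : I ⊆ M.E := by
  obtain ⟨B, hB, hIB⟩ := hI
  exact hIB.trans (M.bases_subset_ground B hB)


/-- Augmentation axiom (I3), derived from basis exchange. -/
lemma indep_augment {I J : Finset α} (hI : M.Indep I) (hJ : M.Indep J)
    (hcard : I.card < J.card) : ∃ x ∈ J, x ∉ I ∧ M.Indep (insert x I) := by
  classical
  obtain ⟨BJ, hBJ, hJBJ⟩ := hJ
  -- strong induction on (B \ (I ∪ BJ)).card over bases B ⊇ I
  suffices H : ∀ n (B : Finset α), M.Bases B → I ⊆ B → (B \ (I ∪ BJ)).card = n →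
      ∃ x ∈ J, x ∉ I ∧ M.Indep (insert x I) by
    obtain ⟨B, hB, hIB⟩ := hI
    exact H _ B hB hIB rfl
  intro n
  induction n using Nat.strong_induction_on with
  | _ n ih =>
    intro B hB hIB hn
    rcases Finset.eq_empty_or_nonempty (B \ (I ∪ BJ)) with he | ⟨u, hu⟩
    · -- B ⊆ I ∪ BJ
      have hBsub : B ⊆ I ∪ BJ := by
        intro a ha; by_contra hc
        exact absurd (Finset.mem_sdiff.mpr ⟨ha, hc⟩) (by simp [he])
      by_cases hx : ∃ x ∈ J, x ∉ I ∧ x ∈ B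
      · obtain ⟨x, hxJ, hxI, hxB⟩ := hx
        exact ⟨x, hxJ, hxI, ⟨B, hB, Finset.insert_subset hxB hIB⟩⟩
      · exfalso
        push_neg at hx
        -- B ∩ J ⊆ I
        have hBJI : ∀ a ∈ B, a ∈ J → a ∈ I := fun a haB haJ => by
          by_contra hc; exact (hx a haJ hc) haB
        -- counting
        have h1 : B.card = BJ.card := M.card_base_eq hB hBJ
        have h2 : B \ BJ ⊆ I \ BJ := by
          intro a ha; rw [Finset.mem_sdiff] at ha ⊢
          rcases Finset.mem_union.mp (hBsub ha.1) with h | h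
          · exact ⟨h, ha.2⟩
          · exact absurd h ha.2
        have h3 : B ∩ BJ ⊆ (BJ \ J) ∪ (I ∩ J) := by
          intro a ha; rw [Finset.mem_inter] at ha
          by_cases haJ : a ∈ J
          · exact Finset.mem_union_right _ (Finset.mem_inter.mpr ⟨hBJI a ha.1 haJ, haJ⟩)
          · exact Finset.mem_union_left _ (Finset.mem_sdiff.mpr ⟨ha.2, haJ⟩)
        have c1 : B.card ≤ (I \ BJ).card + ((BJ \ J).card + (I ∩ J).card) := by
          calc B.card = (B \ BJ).card + (B ∩ BJ).card := by
                rw [Finset.card_sdiff_add_card_inter]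
            _ ≤ (I \ BJ).card + (B ∩ BJ).card := by
                gcongr
            _ ≤ (I \ BJ).card + ((BJ \ J) ∪ (I ∩ J)).card := by
                gcongr
            _ ≤ _ := by have := Finset.card_union_le (BJ \ J) (I ∩ J); omega
        have c2 : (BJ \ J).card = BJ.card - J.card := Finset.card_sdiff_of_subset hJBJ
        have c3 : (I ∩ J).card ≤ (I ∩ BJ).card := by
          exact Finset.card_le_card (Finset.inter_subset_inter (le_refl I) hJBJ)
        have c4 : (I \ BJ).card + (I ∩ BJ).card = I.card :=
          Finset.card_sdiff_add_card_inter _ _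
        have hJle : J.card ≤ BJ.card := Finset.card_le_card hJBJ
        omega
    · -- exchange u out
      rw [Finset.mem_sdiff, Finset.mem_union] at hu
      push_neg at hu
      obtain ⟨huB, huI, huBJ⟩ := hu
      obtain ⟨w, hwBJ, hwB, hB2⟩ := M.basis_exchange B BJ hB hBJ u huB huBJ
      have hIB2 : I ⊆ insert w (B.erase u) := by
        intro a ha
        exact Finset.mem_insert_of_mem (Finset.mem_erase.mpr
          ⟨fun h => huI (h ▸ ha), hIB ha⟩)
      have hsd : (insert w (B.erase u)) \ (I ∪ BJ) = (B \ (I ∪ BJ)).erase u := by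
        ext a
        simp only [Finset.mem_sdiff, Finset.mem_insert, Finset.mem_erase,
          Finset.mem_union]
        constructor
        · rintro ⟨rfl | ⟨hau, haB⟩, haIBJ⟩
          · exact absurd (Or.inr hwBJ) haIBJ
          · exact ⟨hau, haB, haIBJ⟩
        · rintro ⟨hau, haB, haIBJ⟩
          exact ⟨Or.inr ⟨hau, haB⟩, haIBJ⟩
      have hlt : ((insert w (B.erase u)) \ (I ∪ BJ)).card < n := by
        rw [hsd, ← hn]
        exact Finset.card_erase_lt_of_mem (by simp [huB, huI, huBJ])
      exact ih _ hlt _ hB2 hIB2 rfl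

lemma exists_maxIndepIn {X I : Finset α} (hI : M.Indep I) (hIX : I ⊆ X) :
    ∃ J, I ⊆ J ∧ M.MaxIndepIn X J := by
  classical
  generalize hn : (X \ I).card = n
  induction n using Nat.strong_induction_on generalizing I with
  | _ n ih =>
    by_cases h : ∀ x ∈ X, x ∉ I → ¬ M.Indep (insert x I)
    · exact ⟨I, le_refl _, hI, hIX, h⟩
    · push_neg at h
      obtain ⟨x, hxX, hxI, hx⟩ := h
      have hlt : (X \ insert x I).card < n := by
        rw [← hn]
        apply Finset.card_lt_card
        constructor
        · intro a ha; rw [Finset.mem_sdiff] at ha ⊢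
          exact ⟨ha.1, fun h => ha.2 (Finset.mem_insert_of_mem h)⟩
        · intro hsub
          have h1 : x ∈ X \ I := Finset.mem_sdiff.mpr ⟨hxX, hxI⟩
          have h2 := hsub h1
          rw [Finset.mem_sdiff] at h2
          exact h2.2 (Finset.mem_insert_self _ _)
      obtain ⟨J, hJ1, hJ2⟩ := ih _ hlt hx (Finset.insert_subset hxX hIX) rfl
      exact ⟨J, (Finset.subset_insert _ _).trans hJ1, hJ2⟩

lemma maxIndepIn_card_eq {X J J' : Finset α} (hJ : M.MaxIndepIn X J)
    (hJ' : M.MaxIndepIn X J') : J.card = J'.card := by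
  obtain ⟨hJi, hJX, hJm⟩ := hJ
  obtain ⟨hJi', hJX', hJm'⟩ := hJ'
  by_contra hne
  rcases Nat.lt_or_ge J.card J'.card with h | h
  · obtain ⟨x, hxJ', hxJ, hx⟩ := M.indep_augment hJi hJi' h
    exact hJm x (hJX' hxJ') hxJ hx
  · have h' : J'.card < J.card := by omega
    obtain ⟨x, hxJ, hxJ', hx⟩ := M.indep_augment hJi' hJi h'
    exact hJm' x (hJX hxJ) hxJ' hx

/-! ### Circuits -/

lemma exists_circuit_of_dep {X : Finset α} (hX : ¬ M.Indep X) :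
    ∃ C, C ⊆ X ∧ M.IsCircuit C := by
  classical
  generalize hn : X.card = n
  induction n using Nat.strong_induction_on generalizing X with
  | _ n ih =>
    by_cases h : ∀ x ∈ X, M.Indep (X.erase x)
    · exact ⟨X, le_refl _, hX, h⟩
    · push_neg at h
      obtain ⟨x, hxX, hx⟩ := h
      obtain ⟨C, hC1, hC2⟩ := ih (X.erase x).card
        (by rw [← hn]; exact Finset.card_erase_lt_of_mem hxX) hx rfl
      exact ⟨C, hC1.trans (Finset.erase_subset _ _), hC2⟩

lemma circuit_elim {C₁ C₂ : Finset α} (h₁ : M.IsCircuit C₁) (h₂ : M.IsCircuit C₂)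
    (hne : C₁ ≠ C₂) {e : α} (he₁ : e ∈ C₁) (he₂ : e ∈ C₂) :
    ¬ M.Indep ((C₁ ∪ C₂).erase e) := by
  classical
  intro hctr
  obtain ⟨f, hfC₁, hfC₂⟩ : ∃ f ∈ C₁, f ∉ C₂ := by
    by_contra hc
    push_neg at hc
    obtain ⟨x, hxC₂, hxC₁⟩ : ∃ x ∈ C₂, x ∉ C₁ := by
      by_contra hc2
      push_neg at hc2
      exact hne (Finset.Subset.antisymm hc hc2)
    exact h₁.1 (M.indep_mono (h₂.2 x hxC₂)
      (fun a ha => Finset.mem_erase.mpr ⟨fun h => hxC₁ (h ▸ ha), hc a ha⟩))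
  obtain ⟨J, hJ1, hJ2⟩ := M.exists_maxIndepIn (h₁.2 f hfC₁)
    ((Finset.erase_subset _ _).trans (Finset.subset_union_left : C₁ ⊆ C₁ ∪ C₂))
  have hfJ : f ∉ J := by
    intro hfJ
    apply h₁.1
    apply M.indep_mono hJ2.1
    intro a ha
    by_cases haf : a = f
    · exact haf ▸ hfJ
    · exact hJ1 (Finset.mem_erase.mpr ⟨haf, ha⟩)
  obtain ⟨g, hgC₂, hgJ⟩ : ∃ g ∈ C₂, g ∉ J := by
    by_contra hc
    push_neg at hc
    exact h₂.1 (M.indep_mono hJ2.1 hc)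
  have hfg : f ≠ g := fun h => hfC₂ (h ▸ hgC₂)
  have hJcard : J.card + 2 ≤ (C₁ ∪ C₂).card := by
    have hsub : J ⊆ ((C₁ ∪ C₂).erase f).erase g := by
      intro a ha
      exact Finset.mem_erase.mpr ⟨fun h => hgJ (h ▸ ha),
        Finset.mem_erase.mpr ⟨fun h => hfJ (h ▸ ha), hJ2.2.1 ha⟩⟩
    have h1 := Finset.card_le_card hsub
    have hfX : f ∈ C₁ ∪ C₂ := Finset.mem_union_left _ hfC₁
    have hgX : g ∈ (C₁ ∪ C₂).erase f := Finset.mem_erase.mpr ⟨fun h => hfg h.symm,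
      Finset.mem_union_right _ hgC₂⟩
    rw [Finset.card_erase_of_mem hgX, Finset.card_erase_of_mem hfX] at h1
    have h2 : 1 ≤ ((C₁ ∪ C₂).erase f).card := Finset.card_pos.mpr ⟨g, hgX⟩
    have h3 : ((C₁ ∪ C₂).erase f).card = (C₁ ∪ C₂).card - 1 :=
      Finset.card_erase_of_mem hfX
    omega
  obtain ⟨J', hJ'1, hJ'2⟩ := M.exists_maxIndepIn hctr (Finset.erase_subset _ _)
  have hJ'card : (C₁ ∪ C₂).card ≤ J'.card + 1 := by
    have h1 := Finset.card_le_card hJ'1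
    rw [Finset.card_erase_of_mem (Finset.mem_union_left _ he₁)] at h1
    omega
  have heq := M.maxIndepIn_card_eq hJ2 hJ'2
  omega

/-! ### Fundamental circuits -/

lemma insert_dep {B : Finset α} (hB : M.Bases B) {y : α} (hy : y ∉ B) :
    ¬ M.Indep (insert y B) := by
  rintro ⟨B₂, hB₂, hsub⟩
  have heq : B = B₂ := M.base_eq_of_subset hB hB₂
    ((Finset.subset_insert _ _).trans hsub)
  exact hy (heq ▸ hsub (Finset.mem_insert_self _ _))

lemma fundC_isCircuit {B : Finset α} (hB : M.Bases B) {y : α} (hy : y ∉ B) :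
    M.IsCircuit (M.fundC B y) ∧ M.fundC B y ⊆ insert y B := by
  have hex : ∃ C, M.IsCircuit C ∧ C ⊆ insert y B := by
    obtain ⟨C, h1, h2⟩ := M.exists_circuit_of_dep (M.insert_dep hB hy)
    exact ⟨C, h2, h1⟩
  rw [fundC, dif_pos hex]
  exact ⟨hex.choose_spec.1, hex.choose_spec.2⟩

lemma mem_of_circuit_insert {B : Finset α} {y : α} (hy : y ∉ B) {C : Finset α}
    (hC : M.IsCircuit C) (hsub : C ⊆ insert y B) (hBi : M.Indep B) : y ∈ C := by
  by_contra hyC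
  apply hC.1
  apply M.indep_mono hBi
  intro a ha
  rcases Finset.mem_insert.mp (hsub ha) with h | h
  · exact absurd (h ▸ ha) hyC
  · exact h

lemma circuit_insert_unique {B : Finset α} (hB : M.Bases B) {y : α} (hy : y ∉ B)
    {C : Finset α} (hC : M.IsCircuit C) (hsub : C ⊆ insert y B) :
    C = M.fundC B y := by
  obtain ⟨hC', hsub'⟩ := M.fundC_isCircuit hB hy
  by_contra hne
  have hyC : y ∈ C := M.mem_of_circuit_insert hy hC hsub (M.base_indep hB)
  have hyC' : y ∈ M.fundC B y := M.mem_of_circuit_insert hy hC' hsub' (M.base_indep hB)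
  apply M.circuit_elim hC hC' hne hyC hyC'
  apply M.indep_mono (M.base_indep hB)
  intro a ha
  rw [Finset.mem_erase] at ha
  rcases Finset.mem_union.mp ha.2 with h | h
  · rcases Finset.mem_insert.mp (hsub h) with h' | h'
    · exact absurd h' ha.1
    · exact h'
  · rcases Finset.mem_insert.mp (hsub' h) with h' | h'
    · exact absurd h' ha.1
    · exact h'

lemma mem_fundC_self {B : Finset α} (hB : M.Bases B) {y : α} (hy : y ∉ B) :
    y ∈ M.fundC B y := by
  obtain ⟨hC, hsub⟩ := M.fundC_isCircuit hB hy
  exact M.mem_of_circuit_insert hy hC hsub (M.base_indep hB)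

/-- indep set with full cardinality is a base -/
lemma base_of_indep_card {I B' : Finset α} (hI : M.Indep I) (hB' : M.Bases B')
    (h : B'.card ≤ I.card) : M.Bases I := by
  obtain ⟨B₂, hB₂, hsub⟩ := hI
  have hc : B₂.card = B'.card := M.card_base_eq hB₂ hB'
  have heq : I = B₂ := Finset.eq_of_subset_of_card_le hsub (by omega)
  exact heq ▸ hB₂

/-- The exchange–circuit link. -/
lemma exchange_iff_mem_fundC {B : Finset α} (hB : M.Bases B) {x y : α}
    (hx : x ∈ B) (hy : y ∉ B) :
    M.Bases (insert y (B.erase x)) ↔ x ∈ M.fundC B y := by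
  have hxy : x ≠ y := fun h => hy (h ▸ hx)
  constructor
  · intro hbase
    by_contra hxC
    obtain ⟨hC, hsub⟩ := M.fundC_isCircuit hB hy
    apply hC.1
    apply M.indep_mono (M.base_indep hbase)
    intro a ha
    rcases Finset.mem_insert.mp (hsub ha) with h | h
    · exact h ▸ Finset.mem_insert_self _ _
    · exact Finset.mem_insert_of_mem (Finset.mem_erase.mpr
        ⟨fun hax => hxC (hax ▸ ha), h⟩)
  · intro hxC
    have hindep : M.Indep (insert y (B.erase x)) := by
      by_contra hdep
      obtain ⟨C', hC'sub, hC'⟩ := M.exists_circuit_of_dep hdep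
      have hC'insert : C' ⊆ insert y B :=
        hC'sub.trans (Finset.insert_subset_insert _ (Finset.erase_subset _ _))
      have heq : C' = M.fundC B y := M.circuit_insert_unique hB hy hC' hC'insert
      have hxC' : x ∈ C' := heq ▸ hxC
      have := hC'sub hxC'
      rw [Finset.mem_insert, Finset.mem_erase] at this
      rcases this with h | h
      · exact hxy h
      · exact h.1 rfl
    apply M.base_of_indep_card hindep hB
    rw [card_insert_erase hx hy]

/-- Stability of the fundamental circuit under an unrelated exchange. -/
lemma fundC_stable {B : Finset α} (hB : M.Bases B) {x₁ y₁ : α} (hx₁ : x₁ ∈ B)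
    (hy₁ : y₁ ∉ B) (hB' : M.Bases (insert y₁ (B.erase x₁))) {y : α}
    (hy : y ∉ B) (hyy : y ≠ y₁) (hno : x₁ ∉ M.fundC B y) :
    M.fundC (insert y₁ (B.erase x₁)) y = M.fundC B y := by
  obtain ⟨hC, hsub⟩ := M.fundC_isCircuit hB hy
  have hyB' : y ∉ insert y₁ (B.erase x₁) := by
    simp only [Finset.mem_insert, Finset.mem_erase]
    rintro (rfl | ⟨-, h⟩)
    · exact hyy rfl
    · exact hy h
  symm
  apply M.circuit_insert_unique hB' hyB' hC
  intro a ha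
  rcases Finset.mem_insert.mp (hsub ha) with rfl | h
  · exact Finset.mem_insert_self _ _
  · exact Finset.mem_insert_of_mem (Finset.mem_insert_of_mem
      (Finset.mem_erase.mpr ⟨fun hax => hno (hax ▸ ha), h⟩))

/-- Krogdahl's unique-matching lemma, indexed by a finset of naturals in their
natural order. -/
lemma krogdahl : ∀ n (T : Finset ℕ) (Bb : Finset α), T.card = n → M.Bases Bb →
    ∀ (u w : ℕ → α),
    (∀ t ∈ T, u t ∈ Bb) → (∀ t ∈ T, w t ∉ Bb) →
    (∀ t ∈ T, ∀ t' ∈ T, u t = u t' → t = t') →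
    (∀ t ∈ T, ∀ t' ∈ T, w t = w t' → t = t') →
    (∀ t ∈ T, M.Bases (insert (w t) (Bb.erase (u t)))) →
    (∀ t ∈ T, ∀ t' ∈ T, t < t' → ¬ M.Bases (insert (w t') (Bb.erase (u t)))) →
    M.Bases ((Bb \ T.image u) ∪ T.image w) := by
  intro n
  induction n with
  | zero =>
    intro T Bb hT hB u w _ _ _ _ _ _
    rw [Finset.card_eq_zero] at hT
    subst hT
    simpa using hB
  | succ n ih =>
    intro T Bb hT hB u w hu hw huinj hwinj hbase hno
    have hTne : T.Nonempty := by
      rw [← Finset.card_pos, hT]; omega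
    set t₀ := T.min' hTne with ht₀def
    have ht₀T : t₀ ∈ T := T.min'_mem hTne
    set T' := T.erase t₀ with hT'def
    have hT'card : T'.card = n := by
      rw [hT'def, Finset.card_erase_of_mem ht₀T, hT]
      omega
    have ht₀min : ∀ t ∈ T', t₀ < t := by
      intro t ht
      rw [hT'def, Finset.mem_erase] at ht
      exact lt_of_le_of_ne (T.min'_le t ht.2) (Ne.symm ht.1)
    set B' := insert (w t₀) (Bb.erase (u t₀)) with hB'def
    have hB' : M.Bases B' := hbase t₀ ht₀T
    have hmemT : ∀ t ∈ T', t ∈ T := fun t ht => Finset.mem_of_mem_erase ht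
    -- memberships in B'
    have huB' : ∀ t ∈ T', u t ∈ B' := by
      intro t ht
      refine Finset.mem_insert_of_mem (Finset.mem_erase.mpr ⟨?_, hu t (hmemT t ht)⟩)
      intro h
      exact (Finset.mem_erase.mp ht).1 (huinj t (hmemT t ht) t₀ ht₀T h)
    have hwB' : ∀ t ∈ T', w t ∉ B' := by
      intro t ht h
      rcases Finset.mem_insert.mp h with h' | h'
      · exact (Finset.mem_erase.mp ht).1 (hwinj t (hmemT t ht) t₀ ht₀T h')
      · exact hw t (hmemT t ht) (Finset.mem_of_mem_erase h')
    -- transfer of exchanges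
    have htrans : ∀ t ∈ T', ∀ t' ∈ T',
        (M.Bases (insert (w t') (B'.erase (u t))) ↔
          M.Bases (insert (w t') (Bb.erase (u t)))) := by
      intro t ht t' ht'
      have hnot₀ : ¬ M.Bases (insert (w t') (Bb.erase (u t₀))) :=
        hno t₀ ht₀T t' (hmemT t' ht') (ht₀min t' ht')
      have hwt'Bb : w t' ∉ Bb := hw t' (hmemT t' ht')
      have hx₀no : u t₀ ∉ M.fundC Bb (w t') := by
        intro hmem
        exact hnot₀ ((M.exchange_iff_mem_fundC hB (hu t₀ ht₀T) hwt'Bb).mpr hmem)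
      have hstab : M.fundC B' (w t') = M.fundC Bb (w t') := by
        rw [hB'def]
        exact M.fundC_stable hB (hu t₀ ht₀T) (hw t₀ ht₀T) hB' hwt'Bb
          (fun h => (Finset.mem_erase.mp ht').1 (hwinj t' (hmemT t' ht') t₀ ht₀T h)) hx₀no
      rw [M.exchange_iff_mem_fundC hB' (huB' t ht) (hwB' t' ht'),
        M.exchange_iff_mem_fundC hB (hu t (hmemT t ht)) hwt'Bb, hstab]
    have hres := ih T' B' hT'card hB' u w huB' hwB'
      (fun t ht t' ht' h => huinj t (hmemT t ht) t' (hmemT t' ht') h)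
      (fun t ht t' ht' h => hwinj t (hmemT t ht) t' (hmemT t' ht') h)
      (fun t ht => (htrans t ht t ht).mpr (hbase t (hmemT t ht)))
      (fun t ht t' ht' hlt h => hno t (hmemT t ht) t' (hmemT t' ht') hlt
        ((htrans t ht t' ht').mp h))
    -- rewrite the set
    have hTins : T = insert t₀ T' := by
      rw [hT'def, Finset.insert_erase ht₀T]
    have himgu : T.image u = insert (u t₀) (T'.image u) := by
      rw [hTins, Finset.image_insert]
    have himgw : T.image w = insert (w t₀) (T'.image w) := by
      rw [hTins, Finset.image_insert]
    have hseteq : (B' \ T'.image u) ∪ T'.image w = (Bb \ T.image u) ∪ T.image w := by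
      rw [himgu, himgw]
      ext a
      constructor
      · intro h
        rcases Finset.mem_union.mp h with h | h
        · obtain ⟨hmemB', hnotu⟩ := Finset.mem_sdiff.mp h
          rcases Finset.mem_insert.mp hmemB' with rfl | hmem
          · exact Finset.mem_union_right _ (Finset.mem_insert_self _ _)
          · obtain ⟨hne, haBb⟩ := Finset.mem_erase.mp hmem
            refine Finset.mem_union_left _ (Finset.mem_sdiff.mpr ⟨haBb, ?_⟩)
            intro hmem2
            rcases Finset.mem_insert.mp hmem2 with h' | hmem2
            · exact hne h'
            · exact hnotu hmem2
        · exact Finset.mem_union_right _ (Finset.mem_insert_of_mem h)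
      · intro h
        rcases Finset.mem_union.mp h with h | h
        · obtain ⟨haBb, hnotu⟩ := Finset.mem_sdiff.mp h
          refine Finset.mem_union_left _ (Finset.mem_sdiff.mpr ⟨?_, ?_⟩)
          · refine Finset.mem_insert_of_mem (Finset.mem_erase.mpr ⟨?_, haBb⟩)
            intro hh
            exact hnotu (by rw [hh]; exact Finset.mem_insert_self _ _)
          · intro hmem
            exact hnotu (Finset.mem_insert_of_mem hmem)
        · rcases Finset.mem_insert.mp h with rfl | hmem
          · refine Finset.mem_union_left _ (Finset.mem_sdiff.mpr
              ⟨Finset.mem_insert_self _ _, ?_⟩)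
            intro hh
            obtain ⟨t, ht, heq⟩ := Finset.mem_image.mp hh
            exact hw t₀ ht₀T (heq ▸ hu t (hmemT t ht))
          · exact Finset.mem_union_right _ hmem
    rw [← hseteq]
    exact hres

/-- The counting lemma: if no element outside `D` can be exchanged into `B`
for an element of `B ∩ D`, then every base `c` misses at most `|B \ D|`
elements of `D`. -/
lemma card_sdiff_le_of_closed {B c : Finset α} (hB : M.Bases B)
    (hc : M.Bases c) (D : Finset α)
    (hcond : ∀ v ∈ M.E, v ∉ B → v ∉ D → ∀ u ∈ B, u ∈ D →
      ¬ M.Bases (insert v (B.erase u))) :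
    (c \ D).card ≤ (B \ D).card := by
  classical
  have hA : M.Indep (B \ D) := indep_mono (base_indep hB) (Finset.sdiff_subset)
  set X := (B \ D) ∪ (c \ D) with hX
  have hmax : M.MaxIndepIn X (B \ D) := by
    refine ⟨hA, Finset.subset_union_left, ?_⟩
    intro v hvX hvA hvind
    have hvc : v ∈ c \ D := by
      rcases Finset.mem_union.mp hvX with h | h
      · exact absurd h hvA
      · exact h
    obtain ⟨hvcmem, hvD⟩ := Finset.mem_sdiff.mp hvc
    have hvB : v ∉ B := fun h => hvA (Finset.mem_sdiff.mpr ⟨h, hvD⟩)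
    have hvE : v ∈ M.E := indep_subset_ground (base_indep hc) hvcmem
    obtain ⟨hC, hsub⟩ := fundC_isCircuit hB hvB
    apply hC.1
    apply indep_mono hvind
    intro a ha
    rcases Finset.mem_insert.mp (hsub ha) with rfl | haB
    · exact Finset.mem_insert_self _ _
    · have haD : a ∉ D := by
        intro haD
        have hav : a ≠ v := fun h => hvB (h ▸ haB)
        have hbase : M.Bases (insert v (B.erase a)) :=
          (exchange_iff_mem_fundC hB haB hvB).mpr ha
        exact hcond v hvE hvB hvD a haB haD hbase
      exact Finset.mem_insert_of_mem (Finset.mem_sdiff.mpr ⟨haB, haD⟩)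
  obtain ⟨J, hJ1, hJ2⟩ := exists_maxIndepIn
    (indep_mono (base_indep hc) (Finset.sdiff_subset)) Finset.subset_union_right
  have heq := maxIndepIn_card_eq hmax hJ2
  calc (c \ D).card ≤ J.card := Finset.card_le_card hJ1
    _ = (B \ D).card := heq.symm

end AuxLemmas
end FinMatroid

open FinMatroid

set_option maxHeartbeats 1000000
set_option linter.unusedSectionVars false

section UnionStuff
variable (M : Fin k → FinMatroid α)

lemma candidate_card_le {B : Fin k → Finset α} (hB : FeasibleSeq M B)
    {U : Finset α} (hU : IsUnionCandidate M U) :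
    U.card ≤ (Finset.univ.biUnion B).card := by
  obtain ⟨b, hb, rfl⟩ := hU
  calc (Finset.univ.biUnion b).card ≤ ∑ i, (b i).card := Finset.card_biUnion_le
    _ = ∑ i, (B i).card :=
        Finset.sum_congr rfl fun i _ => card_base_eq (hb i) (hB.1 i)
    _ = (Finset.univ.biUnion B).card :=
        (Finset.card_biUnion (fun i _ j _ hij => hB.2 i j hij)).symm

lemma biUnion_isUnionBasis {B : Fin k → Finset α} (hB : FeasibleSeq M B) :
    IsUnionBasis M (Finset.univ.biUnion B) := by
  refine ⟨⟨B, hB.1, rfl⟩, ?_⟩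
  intro V hV hsub
  exact (Finset.eq_of_subset_of_card_le hsub (candidate_card_le M hB hV)).symm ▸ rfl

lemma disjointify {B : Fin k → Finset α} (hB : FeasibleSeq M B) :
    ∀ (c : Fin k → Finset α), (∀ i, (M i).Bases (c i)) →
    ∃ d : Fin k → Finset α, FeasibleSeq M d ∧
      Finset.univ.biUnion c ⊆ Finset.univ.biUnion d := by
  classical
  suffices H : ∀ n (c : Fin k → Finset α), (∀ i, (M i).Bases (c i)) →
      (∑ i, ((c i) \ (B i)).card) = n →
      ∃ d : Fin k → Finset α, FeasibleSeq M d ∧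
        Finset.univ.biUnion c ⊆ Finset.univ.biUnion d by
    intro c hc
    exact H _ c hc rfl
  intro n
  induction n using Nat.strong_induction_on with
  | _ n ih =>
    intro c hc hn
    by_cases hdisj : ∀ i j, i ≠ j → Disjoint (c i) (c j)
    · exact ⟨c, ⟨hc, hdisj⟩, le_refl _⟩
    · push_neg at hdisj
      obtain ⟨i₀, j₀, hne₀, hnd⟩ := hdisj
      obtain ⟨e, hei₀, hej₀⟩ := Finset.not_disjoint_iff.mp hnd
      -- pick the coordinate where e is NOT in the reference base
      obtain ⟨i, j, hne, hei, hej, heBi⟩ :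
          ∃ i j, i ≠ j ∧ e ∈ c i ∧ e ∈ c j ∧ e ∉ B i := by
        by_cases h : e ∈ B i₀
        · refine ⟨j₀, i₀, hne₀.symm, hej₀, hei₀, ?_⟩
          intro h'
          exact (Finset.disjoint_left.mp (hB.2 i₀ j₀ hne₀) h) h'
        · exact ⟨i₀, j₀, hne₀, hei₀, hej₀, h⟩
      obtain ⟨f, hfB, hfc, hbase⟩ :=
        (M i).basis_exchange (c i) (B i) (hc i) (hB.1 i) e hei heBi
      set ci' := insert f ((c i).erase e) with hci'
      set c' := Function.update c i ci' with hc'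
      have hc'bases : ∀ m, (M m).Bases (c' m) := by
        intro m
        by_cases hmi : m = i
        · subst hmi; rw [hc', Function.update_self]; exact hbase
        · rw [hc', Function.update_of_ne hmi]; exact hc m
      have hsdiff : ci' \ B i = ((c i) \ B i).erase e := by
        ext a
        simp only [hci', Finset.mem_sdiff, Finset.mem_insert, Finset.mem_erase]
        constructor
        · rintro ⟨rfl | ⟨hae, hac⟩, haB⟩
          · exact absurd hfB haB
          · exact ⟨hae, hac, haB⟩
        · rintro ⟨hae, hac, haB⟩
          exact ⟨Or.inr ⟨hae, hac⟩, haB⟩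
      have hlt : (∑ m, ((c' m) \ (B m)).card) < n := by
        rw [← hn]
        have h1 : ∑ m, ((c' m) \ (B m)).card =
            (ci' \ B i).card + ∑ m ∈ Finset.univ.erase i, ((c m) \ (B m)).card := by
          rw [← Finset.add_sum_erase _ _ (Finset.mem_univ i)]
          congr 1
          · rw [hc', Function.update_self]
          · apply Finset.sum_congr rfl
            intro m hm
            rw [hc', Function.update_of_ne (Finset.mem_erase.mp hm).1]
        have h2 : ∑ m, ((c m) \ (B m)).card =
            ((c i) \ B i).card + ∑ m ∈ Finset.univ.erase i, ((c m) \ (B m)).card :=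
          (Finset.add_sum_erase _ _ (Finset.mem_univ i)).symm
        have h3 : (ci' \ B i).card < ((c i) \ B i).card := by
          rw [hsdiff]
          exact Finset.card_erase_lt_of_mem (Finset.mem_sdiff.mpr ⟨hei, heBi⟩)
        omega
      obtain ⟨d, hd, hsub⟩ := ih _ hlt c' hc'bases rfl
      refine ⟨d, hd, ?_⟩
      intro a ha
      apply hsub
      obtain ⟨m, -, ham⟩ := Finset.mem_biUnion.mp ha
      by_cases hmi : m = i
      · subst hmi
        by_cases hae : a = e
        · subst hae
          exact Finset.mem_biUnion.mpr ⟨j, Finset.mem_univ j,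
            by rw [hc', Function.update_of_ne (Ne.symm hne)]; exact hej⟩
        · exact Finset.mem_biUnion.mpr ⟨m, Finset.mem_univ m,
            by rw [hc', Function.update_self, hci'];
               exact Finset.mem_insert_of_mem (Finset.mem_erase.mpr ⟨hae, ham⟩)⟩
      · exact Finset.mem_biUnion.mpr ⟨m, Finset.mem_univ m,
          by rw [hc', Function.update_of_ne hmi]; exact ham⟩

end UnionStuff

section Main
variable (M : Fin k → FinMatroid α)

lemma biUnion_subset_ground {B : Fin k → Finset α} (hB : FeasibleSeq M B) :
    Finset.univ.biUnion B ⊆ UnionGround M := by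
  intro a ha
  obtain ⟨i, -, hai⟩ := Finset.mem_biUnion.mp ha
  exact Finset.mem_biUnion.mpr ⟨i, Finset.mem_univ i,
    (M i).bases_subset_ground _ (hB.1 i) hai⟩

lemma coloop_of_unreachable {B : Fin k → Finset α} (hB : FeasibleSeq M B)
    (R : α → α → Prop)
    (hR : ∀ u v, R u v ↔ ∃ i, u ∈ B i ∧ v ∈ (M i).E ∧ v ∉ B i ∧
      (M i).Bases (insert v ((B i).erase u)))
    {x : α} (hx : x ∈ Finset.univ.biUnion B)
    (hnr : ∀ y, y ∈ UnionGround M → y ∉ Finset.univ.biUnion B →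
      ¬ Relation.ReflTransGen R x y) :
    IsUnionColoop M x := by
  classical
  intro U hU
  obtain ⟨b, hb, hUeq⟩ := hU.1
  obtain ⟨d, hd, hsub⟩ := disjointify M hB b hb
  have hUd : U = Finset.univ.biUnion d := hU.2 _ ⟨d, hd.1, rfl⟩ (hUeq ▸ hsub)
  set D := (UnionGround M).filter (fun v => Relation.ReflTransGen R x v) with hD
  have hxE : x ∈ UnionGround M := biUnion_subset_ground M hB hx
  have hxD : x ∈ D := Finset.mem_filter.mpr ⟨hxE, Relation.ReflTransGen.refl⟩
  have hDB : D ⊆ Finset.univ.biUnion B := by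
    intro v hv
    obtain ⟨hvE, hvr⟩ := Finset.mem_filter.mp hv
    by_contra hc
    exact hnr v hvE hc hvr
  have hclosed : ∀ v ∈ D, ∀ w, R v w → w ∈ D := by
    intro v hv w hvw
    obtain ⟨i, -, hwE, -, -⟩ := (hR v w).mp hvw
    refine Finset.mem_filter.mpr ⟨Finset.mem_biUnion.mpr ⟨i, Finset.mem_univ i, hwE⟩, ?_⟩
    exact Relation.ReflTransGen.tail (Finset.mem_filter.mp hv).2 hvw
  have hcount : ∀ i, ((d i) \ D).card ≤ ((B i) \ D).card := by
    intro i
    apply card_sdiff_le_of_closed (hB.1 i) (hd.1 i) D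
    intro v hvE hvB hvD u huB huD hbase
    apply hvD
    exact hclosed u huD v ((hR u v).mpr ⟨i, huB, hvE, hvB, hbase⟩)
  -- global counting
  have hbiU : ∀ (c : Fin k → Finset α), (∀ i j, i ≠ j → Disjoint (c i) (c j)) →
      ((Finset.univ.biUnion c) \ D).card = ∑ i, ((c i) \ D).card := by
    intro c hdisj
    have : (Finset.univ.biUnion c) \ D = Finset.univ.biUnion (fun i => (c i) \ D) := by
      ext a
      simp only [Finset.mem_sdiff, Finset.mem_biUnion]
      tauto
    rw [this]
    exact Finset.card_biUnion (fun i _ j _ hij =>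
      Finset.disjoint_of_subset_left Finset.sdiff_subset
        (Finset.disjoint_of_subset_right Finset.sdiff_subset (hdisj i j hij)))
  have h1 : (U \ D).card ≤ ((Finset.univ.biUnion B) \ D).card := by
    rw [hUd, hbiU d hd.2, hbiU B hB.2]
    exact Finset.sum_le_sum (fun i _ => hcount i)
  have hcardU : U.card = (Finset.univ.biUnion B).card := by
    rw [hUd, Finset.card_biUnion (fun i _ j _ hij => hd.2 i j hij),
      Finset.card_biUnion (fun i _ j _ hij => hB.2 i j hij)]
    exact Finset.sum_congr rfl fun i _ => card_base_eq (hd.1 i) (hB.1 i)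
  have e1 : (U \ D).card + (U ∩ D).card = U.card := Finset.card_sdiff_add_card_inter _ _
  have e2 : ((Finset.univ.biUnion B) \ D).card + ((Finset.univ.biUnion B) ∩ D).card =
      (Finset.univ.biUnion B).card := Finset.card_sdiff_add_card_inter _ _
  have e3 : (Finset.univ.biUnion B) ∩ D = D := Finset.inter_eq_right.mpr hDB
  have hDcard : D.card ≤ (U ∩ D).card := by
    rw [e3] at e2
    omega
  have hUD : U ∩ D = D :=
    Finset.eq_of_subset_of_card_le Finset.inter_subset_right hDcard
  have : x ∈ U ∩ D := hUD.symm ▸ hxD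
  exact (Finset.mem_inter.mp this).1

lemma reflTransGen_path {R : α → α → Prop} {x y : α}
    (h : Relation.ReflTransGen R x y) :
    ∃ n : ℕ, ∃ v : ℕ → α, v 0 = x ∧ v n = y ∧ ∀ t < n, R (v t) (v (t + 1)) := by
  induction h with
  | refl => exact ⟨0, fun _ => x, rfl, rfl, by omega⟩
  | @tail b c hab hbc ih =>
    obtain ⟨n, v, hv0, hvn, harc⟩ := ih
    refine ⟨n + 1, fun t => if t = n + 1 then c else v t,
      by show (if (0:ℕ) = n + 1 then c else v 0) = x
         rw [if_neg (by omega : ¬ (0:ℕ) = n+1)]; exact hv0,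
      by show (if n + 1 = n + 1 then c else v (n+1)) = c
         rw [if_pos rfl], ?_⟩
    intro t ht
    show R (if t = n + 1 then c else v t) (if t + 1 = n + 1 then c else v (t + 1))
    by_cases htn : t = n
    · rw [if_neg (by omega), if_pos (by omega), htn, hvn]
      exact hbc
    · rw [if_neg (by omega), if_neg (by omega)]
      exact harc t (by omega)

end Main


section Forward
variable (M : Fin k → FinMatroid α)

lemma not_coloop_of_reachable {B : Fin k → Finset α} (hB : FeasibleSeq M B)
    (R : α → α → Prop)
    (hR : ∀ u v, R u v ↔ ∃ i, u ∈ B i ∧ v ∈ (M i).E ∧ v ∉ B i ∧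
      (M i).Bases (insert v ((B i).erase u)))
    {x y : α} (hy : y ∈ UnionGround M) (hyB : y ∉ Finset.univ.biUnion B)
    (hreach : Relation.ReflTransGen R x y) : ¬ IsUnionColoop M x := by
  classical
  intro hcol
  by_cases hxB : x ∈ Finset.univ.biUnion B
  case neg => exact hxB (hcol _ (biUnion_isUnionBasis M hB))
  set P : ℕ → Prop := fun n => ∃ v : ℕ → α, v 0 = x ∧ (∀ t < n, R (v t) (v (t+1))) ∧
      v n ∈ UnionGround M ∧ v n ∉ Finset.univ.biUnion B with hPdef
  have hexP : ∃ n, P n := by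
    obtain ⟨n, v, h0, hn, harc⟩ := reflTransGen_path hreach
    exact ⟨n, v, h0, harc, hn ▸ hy, hn ▸ hyB⟩
  set n₀ := Nat.find hexP with hn₀def
  obtain ⟨v, hv0, harc, hendE, hendB⟩ := Nat.find_spec hexP
  rw [← hn₀def] at harc hendE hendB
  have hmin : ∀ m, m < n₀ → ¬ P m := fun m hm => Nat.find_min hexP hm
  have hn₀pos : 0 < n₀ := by
    rcases Nat.eq_zero_or_pos n₀ with h | h
    · exfalso
      apply hendB
      rw [h, hv0]
      exact hxB
    · exact h
  -- no shortcuts along the minimal walk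
  have hnoshort : ∀ p q, p + 1 < q → q ≤ n₀ → ¬ R (v p) (v q) := by
    intro p q hpq hqn hRpq
    have hd1 : 1 ≤ q - p - 1 := by omega
    set d := q - p - 1 with hd
    apply hmin (n₀ - d) (by omega)
    refine ⟨fun t => if t ≤ p then v t else v (t + d), ?_, ?_, ?_, ?_⟩
    · show (if (0:ℕ) ≤ p then v 0 else v (0 + d)) = x
      rw [if_pos (Nat.zero_le p)]; exact hv0
    · intro t ht
      show R (if t ≤ p then v t else v (t + d)) (if t + 1 ≤ p then v (t+1) else v (t + 1 + d))
      by_cases h1 : t + 1 ≤ p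
      · rw [if_pos (by omega), if_pos h1]; exact harc t (by omega)
      · by_cases h2 : t ≤ p
        · have hteq : t = p := by omega
          rw [if_pos h2, if_neg h1, hteq, (by omega : p + 1 + d = q)]
          exact hRpq
        · rw [if_neg h2, if_neg h1, (by omega : t + 1 + d = t + d + 1)]
          exact harc (t + d) (by omega)
    · show (if n₀ - d ≤ p then v (n₀ - d) else v (n₀ - d + d)) ∈ UnionGround M
      rw [if_neg (by omega), (by omega : n₀ - d + d = n₀)]
      exact hendE
    · show (if n₀ - d ≤ p then v (n₀ - d) else v (n₀ - d + d)) ∉ Finset.univ.biUnion B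
      rw [if_neg (by omega), (by omega : n₀ - d + d = n₀)]
      exact hendB
  -- vertices of the minimal walk are distinct
  have hinj : ∀ p q, p < q → q ≤ n₀ → v p ≠ v q := by
    intro p q hpq hqn heq
    have hd1 : 1 ≤ q - p := by omega
    set d := q - p with hd
    apply hmin (n₀ - d) (by omega)
    refine ⟨fun t => if t ≤ p then v t else v (t + d), ?_, ?_, ?_, ?_⟩
    · show (if (0:ℕ) ≤ p then v 0 else v (0 + d)) = x
      rw [if_pos (Nat.zero_le p)]; exact hv0
    · intro t ht
      show R (if t ≤ p then v t else v (t + d)) (if t + 1 ≤ p then v (t+1) else v (t + 1 + d))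
      by_cases h1 : t + 1 ≤ p
      · rw [if_pos (by omega), if_pos h1]; exact harc t (by omega)
      · by_cases h2 : t ≤ p
        · have hteq : t = p := by omega
          rw [if_pos h2, if_neg h1, hteq, (by omega : p + 1 + d = q + 1), heq]
          exact harc q (by omega)
        · rw [if_neg h2, if_neg h1, (by omega : t + 1 + d = t + d + 1)]
          exact harc (t + d) (by omega)
    · show (if n₀ - d ≤ p then v (n₀ - d) else v (n₀ - d + d)) ∈ UnionGround M
      by_cases hc : n₀ - d ≤ p
      · have h1 : n₀ - d = p := by omega
        have h2 : q = n₀ := by omega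
        rw [if_pos hc, h1, heq, h2]
        exact hendE
      · rw [if_neg hc, (by omega : n₀ - d + d = n₀)]
        exact hendE
    · show (if n₀ - d ≤ p then v (n₀ - d) else v (n₀ - d + d)) ∉ Finset.univ.biUnion B
      by_cases hc : n₀ - d ≤ p
      · have h1 : n₀ - d = p := by omega
        have h2 : q = n₀ := by omega
        rw [if_pos hc, h1, heq, h2]
        exact hendB
      · rw [if_neg hc, (by omega : n₀ - d + d = n₀)]
        exact hendB
  -- choose matroid indices along the walk
  have hchoice : ∀ t, t < n₀ → ∃ i : Fin k, v t ∈ B i ∧ v (t+1) ∈ (M i).E ∧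
      v (t+1) ∉ B i ∧ (M i).Bases (insert (v (t+1)) ((B i).erase (v t))) :=
    fun t ht => (hR _ _).mp (harc t ht)
  obtain ⟨i₀, -, hxi₀⟩ := Finset.mem_biUnion.mp hxB
  set ix : ℕ → Fin k := fun t => if h : t < n₀ then (hchoice t h).choose else i₀ with hix
  have hspec : ∀ t, (ht : t < n₀) → v t ∈ B (ix t) ∧ v (t+1) ∈ (M (ix t)).E ∧
      v (t+1) ∉ B (ix t) ∧ (M (ix t)).Bases (insert (v (t+1)) ((B (ix t)).erase (v t))) := by
    intro t ht
    simp only [hix, dif_pos ht]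
    exact (hchoice t ht).choose_spec
  have huniq : ∀ a (i j : Fin k), a ∈ B i → a ∈ B j → i = j := by
    intro a i j hi hj
    by_contra hne
    exact (Finset.disjoint_left.mp (hB.2 i j hne) hi) hj
  set T : Fin k → Finset ℕ := fun i => (Finset.range n₀).filter (fun t => ix t = i) with hT
  have hmemT : ∀ (i : Fin k) t, t ∈ T i ↔ t < n₀ ∧ ix t = i := by
    intro i t
    simp [hT, Finset.mem_filter, Finset.mem_range]
  set B' : Fin k → Finset α := fun i =>
    ((B i) \ (T i).image v) ∪ (T i).image (fun t => v (t+1)) with hB'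
  have hB'bases : ∀ i, (M i).Bases (B' i) := by
    intro i
    apply krogdahl ((T i).card) (T i) (B i) rfl (hB.1 i)
    · intro t ht
      obtain ⟨ht1, ht2⟩ := (hmemT i t).mp ht
      exact ht2 ▸ (hspec t ht1).1
    · intro t ht
      obtain ⟨ht1, ht2⟩ := (hmemT i t).mp ht
      exact ht2 ▸ (hspec t ht1).2.2.1
    · intro t ht t' ht' heq
      obtain ⟨ht1, -⟩ := (hmemT i t).mp ht
      obtain ⟨ht'1, -⟩ := (hmemT i t').mp ht'
      rcases lt_trichotomy t t' with h | h | h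
      · exact absurd heq (hinj t t' h (by omega))
      · exact h
      · exact absurd heq.symm (hinj t' t h (by omega))
    · intro t ht t' ht' heq
      obtain ⟨ht1, -⟩ := (hmemT i t).mp ht
      obtain ⟨ht'1, -⟩ := (hmemT i t').mp ht'
      rcases lt_trichotomy t t' with h | h | h
      · exact absurd heq (hinj (t+1) (t'+1) (by omega) (by omega))
      · exact h
      · exact absurd heq.symm (hinj (t'+1) (t+1) (by omega) (by omega))
    · intro t ht
      obtain ⟨ht1, ht2⟩ := (hmemT i t).mp ht
      exact ht2 ▸ (hspec t ht1).2.2.2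
    · intro t ht t' ht' hlt hbase
      obtain ⟨ht1, ht2⟩ := (hmemT i t).mp ht
      obtain ⟨ht'1, ht'2⟩ := (hmemT i t').mp ht'
      apply hnoshort t (t' + 1) (by omega) (by omega)
      refine (hR _ _).mpr ⟨i, ht2 ▸ (hspec t ht1).1, ht'2 ▸ (hspec t' ht'1).2.1,
        ht'2 ▸ (hspec t' ht'1).2.2.1, hbase⟩
  set Bfin := Finset.univ.biUnion B with hBfin
  set U' := insert (v n₀) (Bfin.erase x) with hU'
  have hU'eq : Finset.univ.biUnion B' = U' := by
    ext a
    simp only [Finset.mem_biUnion, Finset.mem_univ, true_and]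
    constructor
    · rintro ⟨i, hai⟩
      rcases Finset.mem_union.mp hai with h | h
      · obtain ⟨haB, hnt⟩ := Finset.mem_sdiff.mp h
        have hax : a ≠ x := by
          rintro rfl
          apply hnt
          refine Finset.mem_image.mpr ⟨0, (hmemT i 0).mpr ⟨hn₀pos, ?_⟩, hv0⟩
          apply huniq a (ix 0) i ?_ haB
          rw [← hv0] at haB ⊢
          exact (hspec 0 hn₀pos).1
        exact Finset.mem_insert_of_mem (Finset.mem_erase.mpr ⟨hax,
          Finset.mem_biUnion.mpr ⟨i, Finset.mem_univ i, haB⟩⟩)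
      · obtain ⟨t, htT, hta⟩ := Finset.mem_image.mp h
        obtain ⟨ht1, -⟩ := (hmemT i t).mp htT
        by_cases hlast : t + 1 = n₀
        · exact Finset.mem_insert.mpr (Or.inl (by rw [← hta, hlast]))
        · have ht2 : t + 1 < n₀ := by omega
          have hmem : v (t+1) ∈ B (ix (t+1)) := (hspec (t+1) ht2).1
          have hax : a ≠ x := by
            rintro rfl
            exact hinj 0 (t+1) (by omega) (by omega) (by rw [hv0, ← hta])
          exact Finset.mem_insert_of_mem (Finset.mem_erase.mpr ⟨hax,
            Finset.mem_biUnion.mpr ⟨ix (t+1), Finset.mem_univ _, hta ▸ hmem⟩⟩)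
    · intro ha
      rcases Finset.mem_insert.mp ha with rfl | h
      · refine ⟨ix (n₀ - 1), ?_⟩
        apply Finset.mem_union_right
        refine Finset.mem_image.mpr ⟨n₀ - 1, (hmemT _ _).mpr ⟨by omega, rfl⟩, ?_⟩
        congr 1
        omega
      · obtain ⟨hax, haB⟩ := Finset.mem_erase.mp h
        obtain ⟨i, -, hai⟩ := Finset.mem_biUnion.mp haB
        by_cases hrem : ∃ t, t ∈ T i ∧ v t = a
        · obtain ⟨t, htT, hta⟩ := hrem
          obtain ⟨ht1, hti⟩ := (hmemT i t).mp htT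
          have htpos : 0 < t := by
            rcases Nat.eq_zero_or_pos t with h0 | h0
            · exfalso
              apply hax
              rw [← hta, h0, hv0]
            · exact h0
          refine ⟨ix (t-1), ?_⟩
          apply Finset.mem_union_right
          refine Finset.mem_image.mpr ⟨t - 1, (hmemT _ _).mpr ⟨by omega, rfl⟩, ?_⟩
          rw [(by omega : t - 1 + 1 = t)]
          exact hta
        · refine ⟨i, ?_⟩
          apply Finset.mem_union_left
          refine Finset.mem_sdiff.mpr ⟨hai, ?_⟩
          intro hmem
          obtain ⟨t, htT, hta⟩ := Finset.mem_image.mp hmem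
          exact hrem ⟨t, htT, hta⟩
  have hU'card : U'.card = Bfin.card := by
    rw [hU', Finset.card_insert_of_notMem (fun h => hendB (Finset.mem_of_mem_erase h)),
      Finset.card_erase_of_mem hxB]
    have h1 : 1 ≤ Bfin.card := Finset.card_pos.mpr ⟨x, hxB⟩
    omega
  have hU'basis : IsUnionBasis M U' := by
    refine ⟨⟨B', hB'bases, hU'eq.symm⟩, ?_⟩
    intro V hV hsub
    apply Finset.eq_of_subset_of_card_le hsub
    calc V.card ≤ Bfin.card := candidate_card_le M hB hV
      _ = U'.card := hU'card.symm
  have hxU' : x ∈ U' := hcol _ hU'basis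
  rcases Finset.mem_insert.mp hxU' with h | h
  · exact hendB (h ▸ hxB)
  · exact (Finset.mem_erase.mp h).1 rfl

end Forward


/-- **Theorem (statement 5).** Let `B = ⋃ i, B i` and let `R` be the exchange
relation of `D(𝕄, 𝔹)`. Then the set of coloops of `⋁ i, M i` equals
`B \ ⋃_{y ∈ E \ B} T y`, where `T y` is the set of vertices of `E` from which
`y` is reachable under `R`. -/
theorem coloops_eq_base_diff_reachable {α : Type u} [DecidableEq α] {k : ℕ}
    (M : Fin k → FinMatroid α) (B : Fin k → Finset α) (hB : FeasibleSeq M B)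
    (R : α → α → Prop)
    (hR : ∀ u v, R u v ↔ ∃ i, u ∈ B i ∧ v ∈ (M i).E ∧ v ∉ B i ∧
      (M i).Bases (insert v ((B i).erase u))) :
    {x | IsUnionColoop M x} =
      ((Finset.univ.biUnion B : Finset α) : Set α) \
        ⋃ y ∈ ((UnionGround M : Set α) \ ((Finset.univ.biUnion B : Finset α) : Set α)),
          {x : α | x ∈ UnionGround M ∧ Relation.ReflTransGen R x y} := by
  ext x
  simp only [Set.mem_setOf_eq, Set.mem_diff, Finset.mem_coe, Set.mem_iUnion, exists_prop,
    not_exists, not_and]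
  constructor
  · intro hcol
    refine ⟨hcol _ (biUnion_isUnionBasis M hB), ?_⟩
    intro y hy hxE hreach
    exact absurd hcol (not_coloop_of_reachable M hB R hR hy.1 hy.2 hreach)
  · rintro ⟨hxB, hnot⟩
    apply coloop_of_unreachable M hB R hR hxB
    intro y hyE hyB hre
    exact hnot y ⟨hyE, hyB⟩ (biUnion_subset_ground M hB hxB) hre
end
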